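/- For multisegments, the starred and unstarred crystal operators commute for distinct indices: if i ≠ j then f_j(f_i*(M)) = f_i*(f_j(M)) for every multisegment M ∈ MS_n. -/
import Mathlib


/-- A segment `[a,b]` is a pair of integers. -/
abbrev Seg : Type := ℕ × ℕ

/-- A multisegment is a finite multiset of segments. -/
abbrev MS : Type := Multiset Seg

/-- `M ∈ MS_n`: all segments `[a,b]` satisfy `1 ≤ a ≤ b ≤ n`. -/
def IsMS (n : ℕ) (M : MS) : Prop := ∀ s ∈ M, 1 ≤ s.1 ∧ s.1 ≤ s.2 ∧ s.2 ≤ n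

/-- A bracket: `op` = "(", `cl` = ")". -/
inductive Br | op | cl
deriving DecidableEq

/-- One step of the left-to-right bracket cancellation procedure.  The state
`(cls, ops)` records the tags of the currently uncanceled ")" (in order) and the
currently uncanceled "(" (in order).  A new "(" is appended to `ops`; a new ")"
cancels the last uncanceled "(" if there is one, and otherwise is appended to `cls`. -/
def step {τ : Type} : (List τ × List τ) → (Br × τ) → (List τ × List τ)
  | (cls, ops), (Br.op, s) => (cls, ops ++ [s])
  | (cls, ops), (Br.cl, s) => if ops.isEmpty then (cls ++ [s], ops) else (cls, ops.dropLast)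

/-- Process a tagged bracket string; the result `(cls, ops)` lists the tags of the
uncanceled ")" and the uncanceled "(" (left to right).  The reduced (uncanceled)
string is `")"^cls.length ++ "("^ops.length`. -/
def scan {τ : Type} (l : List (Br × τ)) : List τ × List τ := l.foldl step ([], [])

/-- Number of uncanceled ")" in a tagged bracket string. -/
def urStr {τ : Type} (l : List (Br × τ)) : ℕ := (scan l).1.length

/-- Number of uncanceled "(" in a tagged bracket string. -/
def epsStr {τ : Type} (l : List (Br × τ)) : ℕ := (scan l).2.length

/-- Tag of the rightmost uncanceled ")", if any. -/
def lastCl {τ : Type} (l : List (Br × τ)) : Option τ := (scan l).1.getLast?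

/-- Tag of the leftmost uncanceled "(", if any. -/
def headOp {τ : Type} (l : List (Br × τ)) : Option τ := (scan l).2.head?

/-- The string `S_i(M)`: segments are ordered by increasing height, then by
decreasing lower endpoint; each `[h,i]` contributes "(" and each `[h,i-1]`
contributes ")".  In the block of segments of height `t` the "(" over the
`[i-t+1, i]` segments come immediately before the ")" over the `[i-t, i-1]`
segments, and blocks appear for `t = 1, 2, …`. -/
def Si (M : MS) (i : ℕ) : List (Br × Seg) :=
  (List.range i).flatMap fun t0 =>
    let t := t0 + 1
    List.replicate (M.count (i - t + 1, i)) (Br.op, ((i - t + 1 : ℕ), i)) ++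
    List.replicate (M.count (i - t, i - 1)) (Br.cl, ((i - t : ℕ), i - 1))

/-- The string `S_i^*(M)`: segments ordered by increasing height, then by
increasing lower endpoint; each `[i,j]` contributes "(" and each `[i+1,j]`
contributes ")".  In the block of height `t` the "(" below the `[i, i+t-1]`
segments come immediately before the ")" below the `[i+1, i+t]` segments. -/
def SiStar (n : ℕ) (M : MS) (i : ℕ) : List (Br × Seg) :=
  (List.range n).flatMap fun t0 =>
    let t := t0 + 1
    List.replicate (M.count (i, i + t - 1)) (Br.op, (i, i + t - 1)) ++
    List.replicate (M.count (i + 1, i + t)) (Br.cl, (i + 1, i + t))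

/-- The crystal operator `f_i` on multisegments: it changes the segment `[h,i-1]`
under the rightmost uncanceled ")" of `S_i(M)` into `[h,i]`, or adds a new
segment `[i,i]` if there is no uncanceled ")". -/
def fM (i : ℕ) (M : MS) : MS :=
  match lastCl (Si M i) with
  | some s => M.erase s + {(s.1, i)}
  | none => M + {(i, i)}

/-- The crystal operator `e_i` on multisegments: it changes the segment `[h,i]`
under the leftmost uncanceled "(" of `S_i(M)` into `[h,i-1]` (deleting it when
`h = i`), or returns `none` (i.e. `0`) if there is no uncanceled "(". -/
def eM (i : ℕ) (M : MS) : Option MS :=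
  match headOp (Si M i) with
  | some s => some (if s.1 = i then M.erase s else M.erase s + {(s.1, i - 1)})
  | none => none

/-- The operator `f_i^*`: it changes the segment `[i+1,j]` under the rightmost
uncanceled ")" of `S_i^*(M)` into `[i,j]`, or adds `[i,i]` if there is none. -/
def fMStar (n i : ℕ) (M : MS) : MS :=
  match lastCl (SiStar n M i) with
  | some s => M.erase s + {(i, s.2)}
  | none => M + {(i, i)}

/-- The operator `e_i^*`: it changes the segment `[i,j]` under the leftmost
uncanceled "(" of `S_i^*(M)` into `[i+1,j]` (deleting it when `j = i`), or
returns `none` if there is no uncanceled "(". -/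
def eMStar (n i : ℕ) (M : MS) : Option MS :=
  match headOp (SiStar n M i) with
  | some s => some (if s.2 = i then M.erase s else M.erase s + {(i + 1, s.2)})
  | none => none

/-- The number of boxes labeled `j` in `M`: each segment `[a,b]` contains one
box labeled `j` for each `a ≤ j ≤ b`. -/
def boxes (M : MS) (j : ℕ) : ℕ :=
  (M.filter (fun s => s.1 ≤ j ∧ j ≤ s.2)).card

/-- The pairing `⟨wt(M), α_i^∨⟩ = #(boxes i-1) + #(boxes i+1) - 2 #(boxes i)`. -/
def wtPair (M : MS) (i : ℕ) : ℤ :=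
  (boxes M (i - 1) : ℤ) + (boxes M (i + 1) : ℤ) - 2 * (boxes M i : ℤ)


namespace SP

lemma foldl_op {τ : Type} (c o : List τ) (k : ℕ) (u : τ) :
    List.foldl step (c, o) (List.replicate k (Br.op, u)) = (c, o ++ List.replicate k u) := by
  induction k generalizing o with
  | zero => simp
  | succ k ih =>
      rw [List.replicate_succ, List.foldl_cons]
      have hstep : step (c, o) (Br.op, u) = (c, o ++ [u]) := rfl
      rw [hstep, ih]
      simp [List.replicate_succ]

lemma foldl_cl {τ : Type} (c o : List τ) (k : ℕ) (v : τ) :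
    ∃ o' : List τ,
      List.foldl step (c, o) (List.replicate k (Br.cl, v)) =
        (c ++ List.replicate (k - o.length) v, o') ∧ o'.length = o.length - k := by
  induction k generalizing c o with
  | zero => exact ⟨o, by simp, by simp⟩
  | succ k ih =>
      rw [List.replicate_succ, List.foldl_cons]
      by_cases ho : o = []
      · subst ho
        have hstep : step (c, ([] : List τ)) (Br.cl, v) = (c ++ [v], []) := by
          simp [step]
        rw [hstep]
        obtain ⟨o', h1, h2⟩ := ih (c ++ [v]) []
        refine ⟨o', ?_, by simpa using h2⟩
        rw [h1]
        simp [List.replicate_succ, List.append_assoc]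
      · have hlen : 1 ≤ o.length := List.length_pos_iff.2 ho
        have hstep : step (c, o) (Br.cl, v) = (c, o.dropLast) := by
          simp [step, ho]
        rw [hstep]
        obtain ⟨o', h1, h2⟩ := ih c o.dropLast
        rw [List.length_dropLast] at h1 h2
        have e1 : k - (o.length - 1) = k + 1 - o.length := by omega
        rw [e1] at h1
        exact ⟨o', h1, by omega⟩

def blk (p q : ℕ → ℕ) (u v : ℕ → Seg) (N : ℕ) : List (Br × Seg) :=
  (List.range N).flatMap fun k =>
    List.replicate (p k) (Br.op, u k) ++ List.replicate (q k) (Br.cl, v k)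

def lenB (p q : ℕ → ℕ) : ℕ → ℕ
  | 0 => 0
  | k+1 => (lenB p q k + p k) - q k

def RB (p q : ℕ → ℕ) (k : ℕ) : ℕ := q k - (lenB p q k + p k)

def CB (p q : ℕ → ℕ) (v : ℕ → Seg) : ℕ → List Seg
  | 0 => []
  | k+1 => CB p q v k ++ List.replicate (RB p q k) (v k)

lemma scan_blk (p q : ℕ → ℕ) (u v : ℕ → Seg) :
    ∀ N, ∃ o, scan (blk p q u v N) = (CB p q v N, o) ∧ o.length = lenB p q N := by
  intro N
  induction N with
  | zero => exact ⟨[], rfl, rfl⟩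
  | succ N ih =>
      obtain ⟨o, ho, hl⟩ := ih
      have hblk : blk p q u v (N+1) = blk p q u v N ++
          (List.replicate (p N) (Br.op, u N) ++ List.replicate (q N) (Br.cl, v N)) := by
        unfold blk
        rw [List.range_succ, List.flatMap_append]
        simp
      unfold scan at ho ⊢
      rw [hblk, List.foldl_append, ho, List.foldl_append, foldl_op]
      obtain ⟨o', h1, h2⟩ := foldl_cl (CB p q v N) (o ++ List.replicate (p N) (u N)) (q N) (v N)
      refine ⟨o', ?_, ?_⟩
      · rw [h1]
        have : CB p q v (N+1) = CB p q v N ++ List.replicate (RB p q N) (v N) := rfl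
        rw [this]
        congr 2
        simp [RB, hl]
      · simp [hl] at h2
        simp [lenB, h2]

lemma lastCl_blk (p q : ℕ → ℕ) (u v : ℕ → Seg) (N : ℕ) :
    lastCl (blk p q u v N) = (CB p q v N).getLast? := by
  obtain ⟨o, h, _⟩ := scan_blk p q u v N
  rw [lastCl, h]

lemma CB_stable (p q : ℕ → ℕ) (v : ℕ → Seg) {m N : ℕ} (hm : m ≤ N)
    (h : ∀ k, m ≤ k → k < N → RB p q k = 0) : CB p q v N = CB p q v m := by
  induction N with
  | zero => rw [Nat.le_zero.mp hm]
  | succ N ih =>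
      by_cases hmN : m = N + 1
      · subst hmN; rfl
      · have hm' : m ≤ N := by omega
        have : CB p q v (N+1) = CB p q v N ++ List.replicate (RB p q N) (v N) := rfl
        rw [this, h N hm' (by omega)]
        simp
        exact ih hm' (fun k h1 h2 => h k h1 (by omega))

lemma lastCl_blk_some (p q : ℕ → ℕ) (u v : ℕ → Seg) {N T : ℕ} (hT : T < N)
    (hpos : 0 < RB p q T) (hz : ∀ k, T < k → k < N → RB p q k = 0) :
    lastCl (blk p q u v N) = some (v T) := by
  rw [lastCl_blk, CB_stable p q v (show T+1 ≤ N by omega) (fun k h1 h2 => hz k (by omega) h2)]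
  have : CB p q v (T+1) = CB p q v T ++ List.replicate (RB p q T) (v T) := rfl
  rw [this]
  obtain ⟨r, hr⟩ : ∃ r, RB p q T = r + 1 := ⟨RB p q T - 1, by omega⟩
  rw [hr, List.replicate_succ', ← List.append_assoc, List.getLast?_concat]

lemma lastCl_blk_none (p q : ℕ → ℕ) (u v : ℕ → Seg) {N : ℕ}
    (h : ∀ k < N, RB p q k = 0) : lastCl (blk p q u v N) = none := by
  rw [lastCl_blk, CB_stable p q v (Nat.zero_le N) (fun k _ h2 => h k h2)]
  rfl

lemma split_sel (R : ℕ → ℕ) (N : ℕ) :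
    (∀ k < N, R k = 0) ∨ ∃ T, T < N ∧ 0 < R T ∧ ∀ k, T < k → k < N → R k = 0 := by
  induction N with
  | zero => left; omega
  | succ N ih =>
      by_cases h : R N = 0
      · rcases ih with h0 | ⟨T, hT, hp, hz⟩
        · left; intro k hk
          by_cases hkN : k = N
          · subst hkN; exact h
          · exact h0 k (by omega)
        · right; exact ⟨T, by omega, hp, fun k h1 h2 => by
            by_cases hk : k = N
            · subst hk; exact h
            · exact hz k h1 (by omega)⟩
      · right; exact ⟨N, by omega, Nat.pos_of_ne_zero h, fun k h1 h2 => by omega⟩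

lemma lenB_congr {p q p' q' : ℕ → ℕ} : ∀ {m : ℕ},
    (∀ k < m, p' k = p k ∧ q' k = q k) → lenB p' q' m = lenB p q m := by
  intro m
  induction m with
  | zero => intro _; rfl
  | succ m ih =>
      intro h
      have h1 := h m (by omega)
      simp only [lenB, ih (fun k hk => h k (by omega)), h1.1, h1.2]

lemma lenB_congr_from {p q p' q' : ℕ → ℕ} {m : ℕ} (hm : lenB p' q' m = lenB p q m) :
    ∀ {K : ℕ}, m ≤ K → (∀ k, m ≤ k → k < K → p' k = p k ∧ q' k = q k) →
      lenB p' q' K = lenB p q K := by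
  intro K
  induction K with
  | zero => intro h _; have h0 := Nat.le_zero.mp h; subst h0; exact hm
  | succ K ih =>
      intro hK h
      by_cases hmK : m = K + 1
      · subst hmK; exact hm
      · have hK' : m ≤ K := by omega
        have h1 := h K hK' (by omega)
        simp only [lenB, ih hK' (fun k h1 h2 => h k h1 (by omega)), h1.1, h1.2]

lemma P2_lemma {p q p' q' : ℕ → ℕ} {a N : ℕ} (haN : a + 1 < N)
    (hp1 : p a = p' a + 1) (hp2 : p' (a+1) = p (a+1) + 1)
    (hq : ∀ k < N, q' k = q k)
    (hp : ∀ k < N, k ≠ a → k ≠ a + 1 → p' k = p k)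
    (hPQ : q a + 1 ≤ p a) :
    ∀ k < N, RB p' q' k = RB p q k := by
  have hla : lenB p' q' a = lenB p q a :=
    lenB_congr (fun k hk => ⟨hp k (by omega) (by omega) (by omega), hq k (by omega)⟩)
  have hqa := hq a (by omega)
  have hqa1 := hq (a+1) haN
  have hl1 : lenB p' q' (a+1) + 1 = lenB p q (a+1) := by
    simp only [lenB, hla, hqa]; omega
  have hl2 : lenB p' q' (a+2) = lenB p q (a+2) := by
    simp only [lenB, hqa1, hp2]; omega
  have hlater : ∀ K, a + 2 ≤ K → K ≤ N → lenB p' q' K = lenB p q K := by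
    intro K h1 h2
    exact lenB_congr_from hl2 h1
      (fun k hk1 hk2 => ⟨hp k (by omega) (by omega) (by omega), hq k (by omega)⟩)
  intro k hk
  rcases Nat.lt_trichotomy k a with h | h | h
  · unfold RB
    rw [hq k hk, hp k hk (by omega) (by omega),
      lenB_congr (fun k' hk' => ⟨hp k' (by omega) (by omega) (by omega), hq k' (by omega)⟩)]
  · subst h
    unfold RB
    rw [hqa, hla]
    omega
  · rcases Nat.lt_or_ge k (a+2) with h' | h'
    · have : k = a + 1 := by omega
      subst this
      unfold RB
      rw [hqa1, hp2]
      omega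
    · unfold RB
      rw [hq k hk, hp k hk (by omega) (by omega), hlater k h' (by omega)]

lemma P1_lemma {p q p' q' : ℕ → ℕ} {a N : ℕ} (haN : a + 1 < N)
    (hq1 : q a = q' a + 1) (hq2 : q' (a+1) = q (a+1) + 1)
    (hp : ∀ k < N, p' k = p k)
    (hq : ∀ k < N, k ≠ a → k ≠ a + 1 → q' k = q k)
    (hPQ : p (a+1) ≤ q (a+1)) :
    (∀ k < N, k ≠ a → k ≠ a + 1 → RB p' q' k = RB p q k)
    ∧ (RB p q a = 0 → RB p' q' a = 0 ∧ RB p' q' (a+1) = RB p q (a+1))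
    ∧ (0 < RB p q a → RB p' q' a = RB p q a - 1 ∧ RB p' q' (a+1) = RB p q (a+1) + 1) := by
  have hla : lenB p' q' a = lenB p q a :=
    lenB_congr (fun k hk => ⟨hp k (by omega), hq k (by omega) (by omega) (by omega)⟩)
  have hpa := hp a (by omega)
  have hpa1 := hp (a+1) haN
  have hl1 : lenB p' q' (a+1) = (lenB p q a + p a) - (q a - 1) := by
    simp only [lenB, hla, hpa]; omega
  have hlpq : lenB p q (a+1) = (lenB p q a + p a) - q a := rfl
  have hl2 : lenB p' q' (a+2) = lenB p q (a+2) := by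
    simp only [lenB, hq2, hpa1, hl1]
    omega
  have hlater : ∀ K, a + 2 ≤ K → K ≤ N → lenB p' q' K = lenB p q K := by
    intro K h1 h2
    exact lenB_congr_from hl2 h1
      (fun k hk1 hk2 => ⟨hp k (by omega), hq k (by omega) (by omega) (by omega)⟩)
  refine ⟨?_, ?_, ?_⟩
  · intro k hk hka hka1
    rcases Nat.lt_trichotomy k a with h | h | h
    · unfold RB
      rw [hq k hk hka hka1, hp k hk,
        lenB_congr (fun k' hk' => ⟨hp k' (by omega), hq k' (by omega) (by omega) (by omega)⟩)]
    · omega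
    · have h' : a + 2 ≤ k := by omega
      unfold RB
      rw [hq k hk hka hka1, hp k hk, hlater k h' (by omega)]
  · intro h0
    unfold RB at h0 ⊢
    rw [hl1, hlpq, hla, hpa, hq2, hpa1]
    omega
  · intro h0
    unfold RB at h0 ⊢
    rw [hl1, hlpq, hla, hpa, hq2, hpa1]
    omega

lemma P3_lemma {p q p' q' : ℕ → ℕ} {N : ℕ} (hN : 0 < N)
    (hq0 : q' 0 = q 0 + 1) (hq : ∀ k < N, k ≠ 0 → q' k = q k)
    (hp : ∀ k < N, p' k = p k)
    (hPQ : p 0 ≤ q 0) :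
    RB p' q' 0 = RB p q 0 + 1 ∧ ∀ k < N, k ≠ 0 → RB p' q' k = RB p q k := by
  have hp0 := hp 0 hN
  have hl1 : lenB p' q' 1 = lenB p q 1 := by
    simp only [lenB, hq0, hp0]
    omega
  have hlater : ∀ K, 1 ≤ K → K ≤ N → lenB p' q' K = lenB p q K := by
    intro K h1 h2
    exact lenB_congr_from hl1 h1
      (fun k hk1 hk2 => ⟨hp k (by omega), hq k (by omega) (by omega)⟩)
  constructor
  · unfold RB
    simp only [lenB, hq0, hp0]
    omega
  · intro k hk hk0
    unfold RB
    rw [hq k hk hk0, hp k hk, hlater k (by omega) (by omega)]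

lemma K1_fact {p q : ℕ → ℕ} {a : ℕ} (h1 : 0 < RB p q a) (h2 : RB p q (a+1) = 0) :
    q (a+1) ≤ p (a+1) := by
  unfold RB at h1 h2
  have : lenB p q (a+1) = (lenB p q a + p a) - q a := rfl
  omega

lemma K2_fact {p q : ℕ → ℕ} {k : ℕ} (h : 0 < RB p q k) : p k + 1 ≤ q k := by
  unfold RB at h; omega

lemma N_fact {p q : ℕ → ℕ} (h : RB p q 0 = 0) : q 0 ≤ p 0 := by
  unfold RB at h
  have : lenB p q 0 = 0 := rfl
  omega

lemma RB_pos_count {p q : ℕ → ℕ} {k : ℕ} (h : 0 < RB p q k) : 0 < q k := by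
  unfold RB at h; omega

def pJ (M : MS) (j : ℕ) : ℕ → ℕ := fun k => M.count (j - (k+1) + 1, j)
def qJ (M : MS) (j : ℕ) : ℕ → ℕ := fun k => M.count (j - (k+1), j - 1)
def uJ (j : ℕ) : ℕ → Seg := fun k => (j - (k+1) + 1, j)
def vJ (j : ℕ) : ℕ → Seg := fun k => (j - (k+1), j - 1)
def pSt (M : MS) (i : ℕ) : ℕ → ℕ := fun k => M.count (i, i + (k+1) - 1)
def qSt (M : MS) (i : ℕ) : ℕ → ℕ := fun k => M.count (i+1, i + (k+1))
def uSt (i : ℕ) : ℕ → Seg := fun k => (i, i + (k+1) - 1)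
def vSt (i : ℕ) : ℕ → Seg := fun k => (i+1, i + (k+1))

lemma Si_eq_blk (M : MS) (j : ℕ) : Si M j = blk (pJ M j) (qJ M j) (uJ j) (vJ j) j := rfl

lemma SiStar_eq_blk (n : ℕ) (M : MS) (i : ℕ) :
    SiStar n M i = blk (pSt M i) (qSt M i) (uSt i) (vSt i) n := rfl

lemma flatMap_congr {α β : Type*} {l : List α} {f g : α → List β}
    (h : ∀ a ∈ l, f a = g a) : l.flatMap f = l.flatMap g := by
  induction l with
  | nil => rfl
  | cons a l ih =>
      rw [List.flatMap_cons, List.flatMap_cons, h a (by simp),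
        ih (fun x hx => h x (by simp [hx]))]

lemma Si_congr {M M' : MS} {j : ℕ}
    (h : ∀ x : Seg, x.2 = j - 1 ∨ x.2 = j → M'.count x = M.count x) :
    Si M' j = Si M j := by
  unfold Si
  exact flatMap_congr (fun t0 _ => by
    simp only [h (j - (t0+1) + 1, j) (Or.inr rfl), h (j - (t0+1), j - 1) (Or.inl rfl)])

lemma SiStar_congr {n : ℕ} {M M' : MS} {i : ℕ}
    (h : ∀ x : Seg, x.1 = i ∨ x.1 = i + 1 → M'.count x = M.count x) :
    SiStar n M' i = SiStar n M i := by
  unfold SiStar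
  exact flatMap_congr (fun t0 _ => by
    simp only [h (i, i + (t0+1) - 1) (Or.inl rfl), h (i+1, i + (t0+1)) (Or.inr rfl)])

lemma count_move (M : MS) (s t x : Seg) :
    (M.erase s + {t}).count x =
      M.count x - (if x = s then 1 else 0) + (if x = t then 1 else 0) := by
  by_cases h1 : x = s
  · subst h1
    simp [Multiset.count_singleton, Multiset.count_erase_self]
  · simp [h1, Multiset.count_erase_of_ne h1, Multiset.count_singleton]

lemma count_addS (M : MS) (t x : Seg) :
    (M + {t}).count x = M.count x + (if x = t then 1 else 0) := by
  simp [Multiset.count_singleton]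

lemma fM_some {j : ℕ} {M : MS} {s : Seg} (h : lastCl (Si M j) = some s) :
    fM j M = M.erase s + {(s.1, j)} := by
  unfold fM
  rw [h]

lemma fM_none {j : ℕ} {M : MS} (h : lastCl (Si M j) = none) :
    fM j M = M + {(j, j)} := by
  unfold fM
  rw [h]

lemma fMStar_some {n i : ℕ} {M : MS} {s : Seg} (h : lastCl (SiStar n M i) = some s) :
    fMStar n i M = M.erase s + {(i, s.2)} := by
  unfold fMStar
  rw [h]

lemma fMStar_none {n i : ℕ} {M : MS} (h : lastCl (SiStar n M i) = none) :
    fMStar n i M = M + {(i, i)} := by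
  unfold fMStar
  rw [h]

lemma count_eraseS (M : MS) (s x : Seg) :
    (M.erase s).count x = M.count x - (if x = s then 1 else 0) := by
  by_cases h : x = s
  · subst h; simp [Multiset.count_erase_self]
  · simp [h, Multiset.count_erase_of_ne h]

-- multiset kit
lemma S1 (M : MS) (a x b y : Seg) (h1 : a ≠ y) (h2 : b ≠ x) :
    (M.erase a + {x}).erase b + {y} = (M.erase b + {y}).erase a + {x} := by
  refine Multiset.ext.2 fun z => ?_
  simp only [count_eraseS, count_addS]
  split_ifs <;> (try omega) <;> (try (subst_vars; omega)) <;> (exfalso; subst_vars; simp_all)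

lemma S2 (M : MS) (x b y : Seg) (h2 : b ≠ x) :
    (M + {x}).erase b + {y} = (M.erase b + {y}) + {x} := by
  refine Multiset.ext.2 fun z => ?_
  simp only [count_eraseS, count_addS]
  split_ifs <;> (try omega) <;> (try (subst_vars; omega)) <;> (exfalso; subst_vars; simp_all)

lemma S3 (M : MS) (x y : Seg) : M + {x} + {y} = M + {y} + {x} := by
  rw [add_assoc, add_assoc, add_comm ({x} : MS) {y}]

lemma S0 (M : MS) (x : Seg) : (M + {x}).erase x = M := by
  refine Multiset.ext.2 fun z => ?_
  simp only [count_eraseS, count_addS]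
  split_ifs <;> omega

lemma S4 (M : MS) (a x y : Seg) : (M.erase a + {x}).erase x + {y} = M.erase a + {y} := by
  rw [S0]

lemma S5 (M : MS) (a x y : Seg) (hx : x ∈ M) (hax : a ≠ x) (hay : a ≠ y) :
    (M.erase x + {y}).erase a + {x} = M.erase a + {y} := by
  have hcx : 1 ≤ M.count x := Multiset.one_le_count_iff_mem.2 hx
  refine Multiset.ext.2 fun z => ?_
  simp only [count_eraseS, count_addS]
  split_ifs <;> (try omega) <;> (try (subst_vars; omega)) <;> (exfalso; subst_vars; simp_all)

lemma S6 (M : MS) (x y : Seg) (hx : x ∈ M) : M.erase x + {y} + {x} = M + {y} := by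
  have hcx : 1 ≤ M.count x := Multiset.one_le_count_iff_mem.2 hx
  refine Multiset.ext.2 fun z => ?_
  simp only [count_eraseS, count_addS]
  split_ifs <;> (try omega) <;> (subst_vars; omega)

lemma ne_of_fst {x s : Seg} (h : x.1 ≠ s.1) : x ≠ s := fun he => h (congrArg Prod.fst he)
lemma ne_of_snd {x s : Seg} (h : x.2 ≠ s.2) : x ≠ s := fun he => h (congrArg Prod.snd he)
lemma seg_eq {a b c d : ℕ} (h1 : a = c) (h2 : b = d) : ((a, b) : Seg) = (c, d) := by rw [h1, h2]

lemma sel_J {M : MS} {j T : ℕ} (hT : T < j)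
    (hpos : 0 < RB (pJ M j) (qJ M j) T)
    (hz : ∀ k, T < k → k < j → RB (pJ M j) (qJ M j) k = 0) :
    fM j M = M.erase (j - (T+1), j - 1) + {(j - (T+1), j)} := by
  have h := lastCl_blk_some (pJ M j) (qJ M j) (uJ j) (vJ j) hT hpos hz
  rw [← Si_eq_blk] at h
  rw [fM_some h]
  rfl

lemma sel_J_none {M : MS} {j : ℕ} (h : ∀ k < j, RB (pJ M j) (qJ M j) k = 0) :
    fM j M = M + {(j, j)} := by
  have h' := lastCl_blk_none (pJ M j) (qJ M j) (uJ j) (vJ j) h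
  rw [← Si_eq_blk] at h'
  exact fM_none h'

lemma sel_St {n : ℕ} {M : MS} {i T : ℕ} (hT : T < n)
    (hpos : 0 < RB (pSt M i) (qSt M i) T)
    (hz : ∀ k, T < k → k < n → RB (pSt M i) (qSt M i) k = 0) :
    fMStar n i M = M.erase (i + 1, i + (T+1)) + {(i, i + (T+1))} := by
  have h := lastCl_blk_some (pSt M i) (qSt M i) (uSt i) (vSt i) hT hpos hz
  rw [← SiStar_eq_blk] at h
  rw [fMStar_some h]
  rfl

lemma sel_St_none {n : ℕ} {M : MS} {i : ℕ}
    (h : ∀ k < n, RB (pSt M i) (qSt M i) k = 0) :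
    fMStar n i M = M + {(i, i)} := by
  have h' := lastCl_blk_none (pSt M i) (qSt M i) (uSt i) (vSt i) h
  rw [← SiStar_eq_blk] at h'
  exact fMStar_none h'

lemma pJ_move (M : MS) (j : ℕ) (s t : Seg) (hs : s.2 ≠ j) (ht : t.2 ≠ j) :
    pJ (M.erase s + {t}) j = pJ M j := funext fun k => by
  unfold pJ
  rw [count_move, if_neg (ne_of_snd (Ne.symm hs)), if_neg (ne_of_snd (Ne.symm ht))]
  omega

lemma qJ_move (M : MS) (j : ℕ) (s t : Seg) (hs : s.2 ≠ j - 1) (ht : t.2 ≠ j - 1) :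
    qJ (M.erase s + {t}) j = qJ M j := funext fun k => by
  unfold qJ
  rw [count_move, if_neg (ne_of_snd (Ne.symm hs)), if_neg (ne_of_snd (Ne.symm ht))]
  omega

lemma pSt_move (M : MS) (i : ℕ) (s t : Seg) (hs : s.1 ≠ i) (ht : t.1 ≠ i) :
    pSt (M.erase s + {t}) i = pSt M i := funext fun k => by
  unfold pSt
  rw [count_move, if_neg (ne_of_fst (Ne.symm hs)), if_neg (ne_of_fst (Ne.symm ht))]
  omega

lemma qSt_move (M : MS) (i : ℕ) (s t : Seg) (hs : s.1 ≠ i + 1) (ht : t.1 ≠ i + 1) :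
    qSt (M.erase s + {t}) i = qSt M i := funext fun k => by
  unfold qSt
  rw [count_move, if_neg (ne_of_fst (Ne.symm hs)), if_neg (ne_of_fst (Ne.symm ht))]
  omega

lemma pJ_add (M : MS) (j : ℕ) (t : Seg) (ht : t.2 ≠ j) :
    pJ (M + {t}) j = pJ M j := funext fun k => by
  unfold pJ
  rw [count_addS, if_neg (ne_of_snd (Ne.symm ht))]
  omega

lemma qJ_add (M : MS) (j : ℕ) (t : Seg) (ht : t.2 ≠ j - 1) :
    qJ (M + {t}) j = qJ M j := funext fun k => by
  unfold qJ
  rw [count_addS, if_neg (ne_of_snd (Ne.symm ht))]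
  omega

lemma pSt_add (M : MS) (i : ℕ) (t : Seg) (ht : t.1 ≠ i) :
    pSt (M + {t}) i = pSt M i := funext fun k => by
  unfold pSt
  rw [count_addS, if_neg (ne_of_fst (Ne.symm ht))]
  omega

lemma qSt_add (M : MS) (i : ℕ) (t : Seg) (ht : t.1 ≠ i + 1) :
    qSt (M + {t}) i = qSt M i := funext fun k => by
  unfold qSt
  rw [count_addS, if_neg (ne_of_fst (Ne.symm ht))]
  omega

lemma ne_of_fst' {a b c d : ℕ} (h : a ≠ c) : ((a, b) : Seg) ≠ (c, d) := ne_of_fst h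
lemma ne_of_snd' {a b c d : ℕ} (h : b ≠ d) : ((a, b) : Seg) ≠ (c, d) := ne_of_snd h

lemma case_lt_O {n i j : ℕ} (hi : 1 ≤ i) (hj : 1 ≤ j) (hin : i ≤ n) (hjn : j ≤ n)
    (hlt : i < j) (M : MS) {T : ℕ} (hTn : T < n)
    (hpos : 0 < RB (pSt M i) (qSt M i) T)
    (hz : ∀ k, T < k → k < n → RB (pSt M i) (qSt M i) k = 0)
    (hne1 : T + 1 ≠ j - i - 1) (hne2 : T ≠ j - i - 1) :
    fM j (fMStar n i M) = fMStar n i (fM j M) := by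
  have hfst : fMStar n i M = M.erase (i+1, i+(T+1)) + {(i, i+(T+1))} := sel_St hTn hpos hz
  have hub1 : i + (T+1) ≠ j - 1 := by omega
  have hub2 : i + (T+1) ≠ j := by omega
  have hpJ : pJ (M.erase (i+1, i+(T+1)) + {(i, i+(T+1))}) j = pJ M j :=
    pJ_move M j _ _ hub2 hub2
  have hqJ : qJ (M.erase (i+1, i+(T+1)) + {(i, i+(T+1))}) j = qJ M j :=
    qJ_move M j _ _ hub1 hub1
  rcases split_sel (RB (pJ M j) (qJ M j)) j with hzJ | ⟨U, hUj, hposJ, hzJ⟩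
  · -- f_j acts by `none` on M
    have hLf : fM j (fMStar n i M) = (M.erase (i+1, i+(T+1)) + {(i, i+(T+1))}) + {(j,j)} := by
      rw [hfst]
      exact sel_J_none (fun k hk => by rw [hpJ, hqJ]; exact hzJ k hk)
    have hRf1 : fM j M = M + {(j,j)} := sel_J_none hzJ
    by_cases hd1 : i + 1 = j
    · -- (O, N1)
      have hq0 : qSt (M + {(j,j)}) i 0 = qSt M i 0 + 1 := by
        unfold qSt
        rw [count_addS, if_pos (seg_eq (by omega) (by omega))]
      have hqk : ∀ k < n, k ≠ 0 → qSt (M + {(j,j)}) i k = qSt M i k := fun k _ hk0 => by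
        unfold qSt
        rw [count_addS, if_neg (ne_of_snd' (by omega))]
        omega
      have hpk : ∀ k < n, pSt (M + {(j,j)}) i k = pSt M i k := fun k _ => by
        unfold pSt
        rw [count_addS, if_neg (ne_of_fst' (by omega))]
        omega
      have hPQ : pSt M i 0 ≤ qSt M i 0 := by
        have h0 := N_fact (hzJ 0 (by omega))
        unfold pJ qJ at h0
        unfold pSt qSt
        rw [show ((j - (0+1) : ℕ), j - 1) = ((i : ℕ), i + (0+1) - 1) from
              seg_eq (by omega) (by omega),
            show ((j - (0+1) + 1 : ℕ), j) = ((i+1 : ℕ), i + (0+1)) from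
              seg_eq (by omega) (by omega)] at h0
        exact h0
      obtain ⟨hR0, hRk⟩ := P3_lemma (N := n) (by omega) hq0 hqk hpk hPQ
      have hRf2 : fMStar n i (M + {(j,j)}) =
          (M + {(j,j)}).erase (i+1, i+(T+1)) + {(i, i+(T+1))} := by
        refine sel_St hTn ?_ ?_
        · rw [hRk T hTn (by omega)]; exact hpos
        · intro k h1 h2
          rw [hRk k h2 (by omega)]
          exact hz k h1 h2
      rw [hLf, hRf1, hRf2, S2 M _ _ _ (ne_of_snd' (by omega))]
    · -- (O, O-none), j ≥ i+2
      have hps : pSt (M + {(j,j)}) i = pSt M i := pSt_add M i _ (by simp; omega)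
      have hqs : qSt (M + {(j,j)}) i = qSt M i := qSt_add M i _ (by simp; omega)
      have hRf2 : fMStar n i (M + {(j,j)}) =
          (M + {(j,j)}).erase (i+1, i+(T+1)) + {(i, i+(T+1))} := by
        refine sel_St hTn ?_ ?_
        · rw [hps, hqs]; exact hpos
        · intro k h1 h2; rw [hps, hqs]; exact hz k h1 h2
      rw [hLf, hRf1, hRf2, S2 M _ _ _ (ne_of_snd' (by omega))]
  · -- f_j acts by some U on M
    have hselJ : fM j (fMStar n i M) =
        (M.erase (i+1, i+(T+1)) + {(i, i+(T+1))}).erase (j-(U+1), j-1) + {(j-(U+1), j)} := by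
      rw [hfst]
      refine sel_J hUj ?_ ?_
      · rw [hpJ, hqJ]; exact hposJ
      · intro k h1 h2; rw [hpJ, hqJ]; exact hzJ k h1 h2
    have hRf1 : fM j M = M.erase (j-(U+1), j-1) + {(j-(U+1), j)} := sel_J hUj hposJ hzJ
    have hcntJ : 0 < M.count (j-(U+1), j-1) := by
      have h := RB_pos_count hposJ
      unfold qJ at h
      exact h
    by_cases hU1 : U + 1 = j - i - 1
    · -- (O, K1)
      have hjU : j - (U+1) = i + 1 := by omega
      rw [hjU] at hselJ hRf1 hcntJ
      have hq1 : qSt M i U = qSt (M.erase (i+1, j-1) + {(i+1, j)}) i U + 1 := by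
        have hc : 0 < M.count (i+1, i+(U+1)) := by
          rw [show ((i+1 : ℕ), i+(U+1)) = ((i+1 : ℕ), j-1) from seg_eq rfl (by omega)]
          exact hcntJ
        unfold qSt
        rw [count_move, if_pos (seg_eq rfl (by omega)), if_neg (ne_of_snd' (by omega))]
        omega
      have hq2 : qSt (M.erase (i+1, j-1) + {(i+1, j)}) i (U+1) = qSt M i (U+1) + 1 := by
        unfold qSt
        rw [count_move, if_neg (ne_of_snd' (by omega)), if_pos (seg_eq rfl (by omega))]
        omega
      have hpk : ∀ k < n, pSt (M.erase (i+1, j-1) + {(i+1, j)}) i k = pSt M i k := fun k _ => by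
        unfold pSt
        rw [count_move, if_neg (ne_of_fst' (by omega)), if_neg (ne_of_fst' (by omega))]
        omega
      have hqk : ∀ k < n, k ≠ U → k ≠ U + 1 →
          qSt (M.erase (i+1, j-1) + {(i+1, j)}) i k = qSt M i k := fun k _ h1 h2 => by
        unfold qSt
        rw [count_move, if_neg (ne_of_snd' (by omega)), if_neg (ne_of_snd' (by omega))]
        omega
      have hPQ : pSt M i (U+1) ≤ qSt M i (U+1) := by
        have hk1 := K1_fact hposJ (hzJ (U+1) (by omega) (by omega))
        unfold pJ qJ at hk1
        unfold pSt qSt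
        rw [show ((j - (U+1+1) : ℕ), j - 1) = ((i : ℕ), i + (U+1+1) - 1) from
              seg_eq (by omega) (by omega),
            show ((j - (U+1+1) + 1 : ℕ), j) = ((i+1 : ℕ), i + (U+1+1)) from
              seg_eq (by omega) (by omega)] at hk1
        exact hk1
      obtain ⟨hC1, hC2, hC3⟩ := P1_lemma (N := n) (by omega) hq1 hq2 hpk hqk hPQ
      have hRf2 : fMStar n i (M.erase (i+1, j-1) + {(i+1, j)}) =
          (M.erase (i+1, j-1) + {(i+1, j)}).erase (i+1, i+(T+1)) + {(i, i+(T+1))} := by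
        refine sel_St hTn ?_ ?_
        · rw [hC1 T hTn (by omega) (by omega)]; exact hpos
        · intro k h1 h2
          by_cases hkU : k = U
          · rw [hkU]
            exact (hC2 (hz U (by omega) (by omega))).1
          · by_cases hkU1 : k = U + 1
            · rw [hkU1, (hC2 (hz U (by omega) (by omega))).2]
              exact hz (U+1) (by omega) (by omega)
            · rw [hC1 k h2 hkU hkU1]
              exact hz k h1 h2
      rw [hselJ, hRf1, hRf2]
      exact S1 M _ _ _ _ (ne_of_snd' (by omega)) (ne_of_fst' (by omega))
    · by_cases hU2 : U = j - i - 1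
      · -- (O, K2)
        have hjU : j - (U+1) = i := by omega
        rw [hjU] at hselJ hRf1 hcntJ
        have hp1 : pSt M i U = pSt (M.erase (i, j-1) + {(i, j)}) i U + 1 := by
          have hc : 0 < M.count (i, i+(U+1)-1) := by
            rw [show ((i : ℕ), i+(U+1)-1) = ((i : ℕ), j-1) from seg_eq rfl (by omega)]
            exact hcntJ
          unfold pSt
          rw [count_move, if_pos (seg_eq rfl (by omega)), if_neg (ne_of_snd' (by omega))]
          omega
        have hp2 : pSt (M.erase (i, j-1) + {(i, j)}) i (U+1) = pSt M i (U+1) + 1 := by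
          unfold pSt
          rw [count_move, if_neg (ne_of_snd' (by omega)), if_pos (seg_eq rfl (by omega))]
          omega
        have hqk : ∀ k < n, qSt (M.erase (i, j-1) + {(i, j)}) i k = qSt M i k := fun k _ => by
          unfold qSt
          rw [count_move, if_neg (ne_of_fst' (by omega)), if_neg (ne_of_fst' (by omega))]
          omega
        have hpk : ∀ k < n, k ≠ U → k ≠ U + 1 →
            pSt (M.erase (i, j-1) + {(i, j)}) i k = pSt M i k := fun k _ h1 h2 => by
          unfold pSt
          rw [count_move, if_neg (ne_of_snd' (by omega)), if_neg (ne_of_snd' (by omega))]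
          omega
        have hPQ : qSt M i U + 1 ≤ pSt M i U := by
          have hk2 := K2_fact hposJ
          unfold pJ qJ at hk2
          unfold pSt qSt
          rw [show ((j - (U+1) : ℕ), j - 1) = ((i : ℕ), i + (U+1) - 1) from
                seg_eq (by omega) (by omega),
              show ((j - (U+1) + 1 : ℕ), j) = ((i+1 : ℕ), i + (U+1)) from
                seg_eq (by omega) (by omega)] at hk2
          exact hk2
        have hall := P2_lemma (N := n) (a := U) (by omega) hp1 hp2 hqk hpk hPQ
        have hRf2 : fMStar n i (M.erase (i, j-1) + {(i, j)}) =
            (M.erase (i, j-1) + {(i, j)}).erase (i+1, i+(T+1)) + {(i, i+(T+1))} := by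
          refine sel_St hTn ?_ ?_
          · rw [hall T hTn]; exact hpos
          · intro k h1 h2; rw [hall k h2]; exact hz k h1 h2
        rw [hselJ, hRf1, hRf2]
        exact S1 M _ _ _ _ (ne_of_fst' (by omega)) (ne_of_snd' (by omega))
      · -- (O, O-some)
        have hps : pSt (M.erase (j-(U+1), j-1) + {(j-(U+1), j)}) i = pSt M i :=
          pSt_move M i _ _ (by simp; omega) (by simp; omega)
        have hqs : qSt (M.erase (j-(U+1), j-1) + {(j-(U+1), j)}) i = qSt M i :=
          qSt_move M i _ _ (by simp; omega) (by simp; omega)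
        have hRf2 : fMStar n i (M.erase (j-(U+1), j-1) + {(j-(U+1), j)}) =
            (M.erase (j-(U+1), j-1) + {(j-(U+1), j)}).erase (i+1, i+(T+1)) + {(i, i+(T+1))} := by
          refine sel_St hTn ?_ ?_
          · rw [hps, hqs]; exact hpos
          · intro k h1 h2; rw [hps, hqs]; exact hz k h1 h2
        rw [hselJ, hRf1, hRf2]
        exact S1 M _ _ _ _ (ne_of_fst' (by omega)) (ne_of_fst' (by omega))

lemma case_lt_none {n i j : ℕ} (hi : 1 ≤ i) (hj : 1 ≤ j) (hin : i ≤ n) (hjn : j ≤ n)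
    (hlt : i < j) (M : MS)
    (hzSt : ∀ k < n, RB (pSt M i) (qSt M i) k = 0) :
    fM j (fMStar n i M) = fMStar n i (fM j M) := by
  have hfst : fMStar n i M = M + {(i,i)} := sel_St_none hzSt
  by_cases hd1 : i + 1 = j
  · -- N1 row (j = i + 1)
    have hPQst : qSt M i 0 ≤ pSt M i 0 := N_fact (hzSt 0 (by omega))
    -- P3 facts for S_j of Ms = M + {(i,i)}
    have hq0J : qJ (M + {(i,i)}) j 0 = qJ M j 0 + 1 := by
      unfold qJ
      rw [count_addS, if_pos (seg_eq (by omega) (by omega))]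
    have hqkJ : ∀ k < j, k ≠ 0 → qJ (M + {(i,i)}) j k = qJ M j k := fun k hk hk0 => by
      unfold qJ
      rw [count_addS, if_neg (ne_of_fst' (by omega))]
      omega
    have hpkJ : ∀ k < j, pJ (M + {(i,i)}) j k = pJ M j k := fun k hk => by
      unfold pJ
      rw [count_addS, if_neg (ne_of_snd' (by omega))]
      omega
    have hPQJ : pJ M j 0 ≤ qJ M j 0 := by
      unfold pSt qSt at hPQst
      unfold pJ qJ
      rw [show ((j - (0+1) : ℕ), j - 1) = ((i : ℕ), i + (0+1) - 1) from
            seg_eq (by omega) (by omega),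
          show ((j - (0+1) + 1 : ℕ), j) = ((i+1 : ℕ), i + (0+1)) from
            seg_eq (by omega) (by omega)]
      exact hPQst
    obtain ⟨hR0J, hRkJ⟩ := P3_lemma (N := j) (by omega) hq0J hqkJ hpkJ hPQJ
    rcases split_sel (RB (pJ M j) (qJ M j)) j with hzJ | ⟨U, hUj, hposJ, hzJ⟩
    · -- (N1, N1)
      have hLf : fM j (M + {(i,i)}) =
          (M + {(i,i)}).erase (j - (0+1), j-1) + {(j - (0+1), j)} := by
        refine sel_J (by omega) ?_ ?_
        · rw [hR0J, hzJ 0 (by omega)]; omega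
        · intro k h1 h2
          rw [hRkJ k h2 (by omega)]
          exact hzJ k h2
      rw [show ((j - (0+1) : ℕ), (j - 1 : ℕ)) = ((i : ℕ), (i : ℕ)) from
            seg_eq (by omega) (by omega),
          show (j - (0+1) : ℕ) = (i : ℕ) from by omega] at hLf
      have hRf1 : fM j M = M + {(j,j)} := sel_J_none hzJ
      -- P3 facts for S_i* of M + {(j,j)}
      have hq0 : qSt (M + {(j,j)}) i 0 = qSt M i 0 + 1 := by
        unfold qSt
        rw [count_addS, if_pos (seg_eq (by omega) (by omega))]
      have hqk : ∀ k < n, k ≠ 0 → qSt (M + {(j,j)}) i k = qSt M i k := fun k hk hk0 => by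
        unfold qSt
        rw [count_addS, if_neg (ne_of_snd' (by omega))]
        omega
      have hpk : ∀ k < n, pSt (M + {(j,j)}) i k = pSt M i k := fun k hk => by
        unfold pSt
        rw [count_addS, if_neg (ne_of_fst' (by omega))]
        omega
      have hPQ2 : pSt M i 0 ≤ qSt M i 0 := by
        have h0 := N_fact (hzJ 0 (by omega))
        unfold pJ qJ at h0
        unfold pSt qSt
        rw [show ((j - (0+1) : ℕ), j - 1) = ((i : ℕ), i + (0+1) - 1) from
              seg_eq (by omega) (by omega),
            show ((j - (0+1) + 1 : ℕ), j) = ((i+1 : ℕ), i + (0+1)) from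
              seg_eq (by omega) (by omega)] at h0
        exact h0
      obtain ⟨hR0, hRk⟩ := P3_lemma (N := n) (by omega) hq0 hqk hpk hPQ2
      have hRf2 : fMStar n i (M + {(j,j)}) =
          (M + {(j,j)}).erase (i+1, i+(0+1)) + {(i, i+(0+1))} := by
        refine sel_St (by omega) ?_ ?_
        · rw [hR0, hzSt 0 (by omega)]; omega
        · intro k h1 h2
          rw [hRk k h2 (by omega)]
          exact hzSt k h2
      rw [hfst, hLf, hRf1, hRf2, S0,
        show ((i+1 : ℕ), (i + (0+1) : ℕ)) = ((j : ℕ), (j : ℕ)) from seg_eq (by omega) (by omega),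
        S0, show (i + (0+1) : ℕ) = (j : ℕ) from by omega]
    · by_cases hU2 : U = 0
      · -- (N1, K2)
        subst hU2
        have hcntJ : 0 < M.count (i, i) := by
          have h := RB_pos_count hposJ
          unfold qJ at h
          rw [show ((j - (0+1) : ℕ), (j - 1 : ℕ)) = ((i : ℕ), (i : ℕ)) from
                seg_eq (by omega) (by omega)] at h
          exact h
        have hLf : fM j (M + {(i,i)}) =
            (M + {(i,i)}).erase (j - (0+1), j-1) + {(j - (0+1), j)} := by
          refine sel_J (by omega) ?_ ?_
          · rw [hR0J]; omega
          · intro k h1 h2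
            rw [hRkJ k h2 (by omega)]
            exact hzJ k h1 h2
        rw [show ((j - (0+1) : ℕ), (j - 1 : ℕ)) = ((i : ℕ), (i : ℕ)) from
              seg_eq (by omega) (by omega),
            show (j - (0+1) : ℕ) = (i : ℕ) from by omega] at hLf
        have hRf1 : fM j M = M.erase (j - (0+1), j-1) + {(j - (0+1), j)} :=
          sel_J hUj hposJ hzJ
        rw [show ((j - (0+1) : ℕ), (j - 1 : ℕ)) = ((i : ℕ), (i : ℕ)) from
              seg_eq (by omega) (by omega),
            show (j - (0+1) : ℕ) = (i : ℕ) from by omega] at hRf1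
        -- P2 on S_i* of M1 = M.erase (i,i) + {(i,j)}
        have hp1 : pSt M i 0 = pSt (M.erase (i,i) + {(i,j)}) i 0 + 1 := by
          have hc : 0 < M.count (i, i+(0+1)-1) := by
            rw [show ((i : ℕ), (i+(0+1)-1 : ℕ)) = ((i : ℕ), (i : ℕ)) from
                  seg_eq rfl (by omega)]
            exact hcntJ
          unfold pSt
          rw [count_move, if_pos (seg_eq rfl (by omega)), if_neg (ne_of_snd' (by omega))]
          omega
        have hp2 : pSt (M.erase (i,i) + {(i,j)}) i (0+1) = pSt M i (0+1) + 1 := by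
          unfold pSt
          rw [count_move, if_neg (ne_of_snd' (by omega)), if_pos (seg_eq rfl (by omega))]
          omega
        have hqk : ∀ k < n, qSt (M.erase (i,i) + {(i,j)}) i k = qSt M i k := fun k _ => by
          unfold qSt
          rw [count_move, if_neg (ne_of_fst' (by omega)), if_neg (ne_of_fst' (by omega))]
          omega
        have hpk : ∀ k < n, k ≠ 0 → k ≠ 0 + 1 →
            pSt (M.erase (i,i) + {(i,j)}) i k = pSt M i k := fun k _ h1 h2 => by
          unfold pSt
          rw [count_move, if_neg (ne_of_snd' (by omega)), if_neg (ne_of_snd' (by omega))]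
          omega
        have hPQ : qSt M i 0 + 1 ≤ pSt M i 0 := by
          have hk2 := K2_fact hposJ
          unfold pJ qJ at hk2
          unfold pSt qSt
          rw [show ((j - (0+1) : ℕ), j - 1) = ((i : ℕ), i + (0+1) - 1) from
                seg_eq (by omega) (by omega),
              show ((j - (0+1) + 1 : ℕ), j) = ((i+1 : ℕ), i + (0+1)) from
                seg_eq (by omega) (by omega)] at hk2
          exact hk2
        have hall := P2_lemma (N := n) (a := 0) (by omega) hp1 hp2 hqk hpk hPQ
        have hRf2 : fMStar n i (M.erase (i,i) + {(i,j)}) = (M.erase (i,i) + {(i,j)}) + {(i,i)} := by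
          refine sel_St_none ?_
          intro k hk
          rw [hall k hk]
          exact hzSt k hk
        rw [hfst, hLf, hRf1, hRf2, S0,
          S6 M (i,i) (i,j) (Multiset.count_pos.mp hcntJ)]
      · -- (N1, O) : U ≥ 1
        have hLf : fM j (M + {(i,i)}) =
            (M + {(i,i)}).erase (j-(U+1), j-1) + {(j-(U+1), j)} := by
          refine sel_J hUj ?_ ?_
          · rw [hRkJ U hUj hU2]; exact hposJ
          · intro k h1 h2
            rw [hRkJ k h2 (by omega)]
            exact hzJ k h1 h2
        have hRf1 : fM j M = M.erase (j-(U+1), j-1) + {(j-(U+1), j)} := sel_J hUj hposJ hzJ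
        have hps : pSt (M.erase (j-(U+1), j-1) + {(j-(U+1), j)}) i = pSt M i :=
          pSt_move M i _ _ (by simp; omega) (by simp; omega)
        have hqs : qSt (M.erase (j-(U+1), j-1) + {(j-(U+1), j)}) i = qSt M i :=
          qSt_move M i _ _ (by simp; omega) (by simp; omega)
        have hRf2 : fMStar n i (M.erase (j-(U+1), j-1) + {(j-(U+1), j)}) =
            (M.erase (j-(U+1), j-1) + {(j-(U+1), j)}) + {(i,i)} := by
          refine sel_St_none ?_
          intro k hk
          rw [show RB (pSt (M.erase (j-(U+1), j-1) + {(j-(U+1), j)}) i)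
                (qSt (M.erase (j-(U+1), j-1) + {(j-(U+1), j)}) i) k
              = RB (pSt M i) (qSt M i) k from by rw [hps, hqs]]
          exact hzSt k hk
        rw [hfst, hLf, hRf1, hRf2, S2 M _ _ _ (ne_of_fst' (by omega))]
  · -- N row, j ≥ i + 2 : the added (i,i) does not interact with S_j
    have hpJ : pJ (M + {(i,i)}) j = pJ M j := pJ_add M j _ (by simp; omega)
    have hqJ : qJ (M + {(i,i)}) j = qJ M j := qJ_add M j _ (by simp; omega)
    rcases split_sel (RB (pJ M j) (qJ M j)) j with hzJ | ⟨U, hUj, hposJ, hzJ⟩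
    · -- (N, none)
      have hLf : fM j (M + {(i,i)}) = (M + {(i,i)}) + {(j,j)} := by
        refine sel_J_none ?_
        intro k hk
        rw [show RB (pJ (M + {(i,i)}) j) (qJ (M + {(i,i)}) j) k
              = RB (pJ M j) (qJ M j) k from by rw [hpJ, hqJ]]
        exact hzJ k hk
      have hRf1 : fM j M = M + {(j,j)} := sel_J_none hzJ
      have hps : pSt (M + {(j,j)}) i = pSt M i := pSt_add M i _ (by simp; omega)
      have hqs : qSt (M + {(j,j)}) i = qSt M i := qSt_add M i _ (by simp; omega)
      have hRf2 : fMStar n i (M + {(j,j)}) = (M + {(j,j)}) + {(i,i)} := by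
        refine sel_St_none ?_
        intro k hk
        rw [show RB (pSt (M + {(j,j)}) i) (qSt (M + {(j,j)}) i) k
              = RB (pSt M i) (qSt M i) k from by rw [hps, hqs]]
        exact hzSt k hk
      rw [hfst, hLf, hRf1, hRf2, S3]
    · -- (N, some U)
      have hLf : fM j (M + {(i,i)}) =
          (M + {(i,i)}).erase (j-(U+1), j-1) + {(j-(U+1), j)} := by
        refine sel_J hUj ?_ ?_
        · rw [show RB (pJ (M + {(i,i)}) j) (qJ (M + {(i,i)}) j) U
                = RB (pJ M j) (qJ M j) U from by rw [hpJ, hqJ]]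
          exact hposJ
        · intro k h1 h2
          rw [show RB (pJ (M + {(i,i)}) j) (qJ (M + {(i,i)}) j) k
                = RB (pJ M j) (qJ M j) k from by rw [hpJ, hqJ]]
          exact hzJ k h1 h2
      have hRf1 : fM j M = M.erase (j-(U+1), j-1) + {(j-(U+1), j)} := sel_J hUj hposJ hzJ
      have hcntJ : 0 < M.count (j-(U+1), j-1) := by
        have h := RB_pos_count hposJ
        unfold qJ at h
        exact h
      by_cases hU1 : U + 1 = j - i - 1
      · -- (N, K1)
        have hjU : j - (U+1) = i + 1 := by omega
        rw [hjU] at hLf hRf1 hcntJ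
        have hq1 : qSt M i U = qSt (M.erase (i+1, j-1) + {(i+1, j)}) i U + 1 := by
          have hc : 0 < M.count (i+1, i+(U+1)) := by
            rw [show ((i+1 : ℕ), i+(U+1)) = ((i+1 : ℕ), j-1) from seg_eq rfl (by omega)]
            exact hcntJ
          unfold qSt
          rw [count_move, if_pos (seg_eq rfl (by omega)), if_neg (ne_of_snd' (by omega))]
          omega
        have hq2 : qSt (M.erase (i+1, j-1) + {(i+1, j)}) i (U+1) = qSt M i (U+1) + 1 := by
          unfold qSt
          rw [count_move, if_neg (ne_of_snd' (by omega)), if_pos (seg_eq rfl (by omega))]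
          omega
        have hpk : ∀ k < n, pSt (M.erase (i+1, j-1) + {(i+1, j)}) i k = pSt M i k := fun k _ => by
          unfold pSt
          rw [count_move, if_neg (ne_of_fst' (by omega)), if_neg (ne_of_fst' (by omega))]
          omega
        have hqk : ∀ k < n, k ≠ U → k ≠ U + 1 →
            qSt (M.erase (i+1, j-1) + {(i+1, j)}) i k = qSt M i k := fun k _ h1 h2 => by
          unfold qSt
          rw [count_move, if_neg (ne_of_snd' (by omega)), if_neg (ne_of_snd' (by omega))]
          omega
        have hPQ : pSt M i (U+1) ≤ qSt M i (U+1) := by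
          have hk1 := K1_fact hposJ (hzJ (U+1) (by omega) (by omega))
          unfold pJ qJ at hk1
          unfold pSt qSt
          rw [show ((j - (U+1+1) : ℕ), j - 1) = ((i : ℕ), i + (U+1+1) - 1) from
                seg_eq (by omega) (by omega),
              show ((j - (U+1+1) + 1 : ℕ), j) = ((i+1 : ℕ), i + (U+1+1)) from
                seg_eq (by omega) (by omega)] at hk1
          exact hk1
        obtain ⟨hC1, hC2, hC3⟩ := P1_lemma (N := n) (by omega) hq1 hq2 hpk hqk hPQ
        have hRf2 : fMStar n i (M.erase (i+1, j-1) + {(i+1, j)}) =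
            (M.erase (i+1, j-1) + {(i+1, j)}) + {(i,i)} := by
          refine sel_St_none ?_
          intro k hk
          by_cases hkU : k = U
          · rw [hkU]
            exact (hC2 (hzSt U (by omega))).1
          · by_cases hkU1 : k = U + 1
            · rw [hkU1, (hC2 (hzSt U (by omega))).2]
              exact hzSt (U+1) (by omega)
            · rw [hC1 k hk hkU hkU1]
              exact hzSt k hk
        rw [hfst, hLf, hRf1, hRf2, S2 M _ _ _ (ne_of_fst' (by omega))]
      · by_cases hU2 : U = j - i - 1
        · -- (N, K2)
          have hjU : j - (U+1) = i := by omega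
          rw [hjU] at hLf hRf1 hcntJ
          have hp1 : pSt M i U = pSt (M.erase (i, j-1) + {(i, j)}) i U + 1 := by
            have hc : 0 < M.count (i, i+(U+1)-1) := by
              rw [show ((i : ℕ), i+(U+1)-1) = ((i : ℕ), j-1) from seg_eq rfl (by omega)]
              exact hcntJ
            unfold pSt
            rw [count_move, if_pos (seg_eq rfl (by omega)), if_neg (ne_of_snd' (by omega))]
            omega
          have hp2 : pSt (M.erase (i, j-1) + {(i, j)}) i (U+1) = pSt M i (U+1) + 1 := by
            unfold pSt
            rw [count_move, if_neg (ne_of_snd' (by omega)), if_pos (seg_eq rfl (by omega))]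
            omega
          have hqk : ∀ k < n, qSt (M.erase (i, j-1) + {(i, j)}) i k = qSt M i k := fun k _ => by
            unfold qSt
            rw [count_move, if_neg (ne_of_fst' (by omega)), if_neg (ne_of_fst' (by omega))]
            omega
          have hpk : ∀ k < n, k ≠ U → k ≠ U + 1 →
              pSt (M.erase (i, j-1) + {(i, j)}) i k = pSt M i k := fun k _ h1 h2 => by
            unfold pSt
            rw [count_move, if_neg (ne_of_snd' (by omega)), if_neg (ne_of_snd' (by omega))]
            omega
          have hPQ : qSt M i U + 1 ≤ pSt M i U := by
            have hk2 := K2_fact hposJ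
            unfold pJ qJ at hk2
            unfold pSt qSt
            rw [show ((j - (U+1) : ℕ), j - 1) = ((i : ℕ), i + (U+1) - 1) from
                  seg_eq (by omega) (by omega),
                show ((j - (U+1) + 1 : ℕ), j) = ((i+1 : ℕ), i + (U+1)) from
                  seg_eq (by omega) (by omega)] at hk2
            exact hk2
          have hall := P2_lemma (N := n) (a := U) (by omega) hp1 hp2 hqk hpk hPQ
          have hRf2 : fMStar n i (M.erase (i, j-1) + {(i, j)}) =
              (M.erase (i, j-1) + {(i, j)}) + {(i,i)} := by
            refine sel_St_none ?_
            intro k hk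
            rw [hall k hk]
            exact hzSt k hk
          rw [hfst, hLf, hRf1, hRf2, S2 M _ _ _ (ne_of_snd' (by omega))]
        · -- (N, O)
          have hps : pSt (M.erase (j-(U+1), j-1) + {(j-(U+1), j)}) i = pSt M i :=
            pSt_move M i _ _ (by simp; omega) (by simp; omega)
          have hqs : qSt (M.erase (j-(U+1), j-1) + {(j-(U+1), j)}) i = qSt M i :=
            qSt_move M i _ _ (by simp; omega) (by simp; omega)
          have hRf2 : fMStar n i (M.erase (j-(U+1), j-1) + {(j-(U+1), j)}) =
              (M.erase (j-(U+1), j-1) + {(j-(U+1), j)}) + {(i,i)} := by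
            refine sel_St_none ?_
            intro k hk
            rw [show RB (pSt (M.erase (j-(U+1), j-1) + {(j-(U+1), j)}) i)
                  (qSt (M.erase (j-(U+1), j-1) + {(j-(U+1), j)}) i) k
                = RB (pSt M i) (qSt M i) k from by rw [hps, hqs]]
            exact hzSt k hk
          rw [hfst, hLf, hRf1, hRf2, S2 M _ _ _ (ne_of_fst' (by omega))]

lemma case_gt {n i j : ℕ} (hi : 1 ≤ i) (hj : 1 ≤ j) (hin : i ≤ n) (hjn : j ≤ n)
    (hgt : j < i) (M : MS) :
    fM j (fMStar n i M) = fMStar n i (fM j M) := by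
  rcases split_sel (RB (pSt M i) (qSt M i)) n with hzSt | ⟨T, hTn, hpos, hz⟩
  · have hfst : fMStar n i M = M + {(i,i)} := sel_St_none hzSt
    have hpJ : pJ (M + {(i,i)}) j = pJ M j := pJ_add M j _ (by simp; omega)
    have hqJ : qJ (M + {(i,i)}) j = qJ M j := qJ_add M j _ (by simp; omega)
    rcases split_sel (RB (pJ M j) (qJ M j)) j with hzJ | ⟨U, hUj, hposJ, hzJ⟩
    · have hLf : fM j (M + {(i,i)}) = (M + {(i,i)}) + {(j,j)} :=
        sel_J_none (fun k hk => by rw [hpJ, hqJ]; exact hzJ k hk)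
      have hRf1 : fM j M = M + {(j,j)} := sel_J_none hzJ
      have hps : pSt (M + {(j,j)}) i = pSt M i := pSt_add M i _ (by simp; omega)
      have hqs : qSt (M + {(j,j)}) i = qSt M i := qSt_add M i _ (by simp; omega)
      have hRf2 : fMStar n i (M + {(j,j)}) = (M + {(j,j)}) + {(i,i)} :=
        sel_St_none (fun k hk => by rw [hps, hqs]; exact hzSt k hk)
      rw [hfst, hLf, hRf1, hRf2, S3]
    · have hLf : fM j (M + {(i,i)}) =
          (M + {(i,i)}).erase (j-(U+1), j-1) + {(j-(U+1), j)} := by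
        refine sel_J hUj ?_ ?_
        · rw [hpJ, hqJ]; exact hposJ
        · intro k h1 h2; rw [hpJ, hqJ]; exact hzJ k h1 h2
      have hRf1 : fM j M = M.erase (j-(U+1), j-1) + {(j-(U+1), j)} := sel_J hUj hposJ hzJ
      have hps : pSt (M.erase (j-(U+1), j-1) + {(j-(U+1), j)}) i = pSt M i :=
        pSt_move M i _ _ (by simp; omega) (by simp; omega)
      have hqs : qSt (M.erase (j-(U+1), j-1) + {(j-(U+1), j)}) i = qSt M i :=
        qSt_move M i _ _ (by simp; omega) (by simp; omega)
      have hRf2 : fMStar n i (M.erase (j-(U+1), j-1) + {(j-(U+1), j)}) =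
          (M.erase (j-(U+1), j-1) + {(j-(U+1), j)}) + {(i,i)} :=
        sel_St_none (fun k hk => by rw [hps, hqs]; exact hzSt k hk)
      rw [hfst, hLf, hRf1, hRf2, S2 M _ _ _ (ne_of_fst' (by omega))]
  · have hfst : fMStar n i M = M.erase (i+1, i+(T+1)) + {(i, i+(T+1))} := sel_St hTn hpos hz
    have hpJ : pJ (M.erase (i+1, i+(T+1)) + {(i, i+(T+1))}) j = pJ M j :=
      pJ_move M j _ _ (by simp; omega) (by simp; omega)
    have hqJ : qJ (M.erase (i+1, i+(T+1)) + {(i, i+(T+1))}) j = qJ M j :=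
      qJ_move M j _ _ (by simp; omega) (by simp; omega)
    rcases split_sel (RB (pJ M j) (qJ M j)) j with hzJ | ⟨U, hUj, hposJ, hzJ⟩
    · have hLf : fM j (fMStar n i M) =
          (M.erase (i+1, i+(T+1)) + {(i, i+(T+1))}) + {(j,j)} := by
        rw [hfst]
        exact sel_J_none (fun k hk => by rw [hpJ, hqJ]; exact hzJ k hk)
      have hRf1 : fM j M = M + {(j,j)} := sel_J_none hzJ
      have hps : pSt (M + {(j,j)}) i = pSt M i := pSt_add M i _ (by simp; omega)
      have hqs : qSt (M + {(j,j)}) i = qSt M i := qSt_add M i _ (by simp; omega)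
      have hRf2 : fMStar n i (M + {(j,j)}) =
          (M + {(j,j)}).erase (i+1, i+(T+1)) + {(i, i+(T+1))} := by
        refine sel_St hTn ?_ ?_
        · rw [hps, hqs]; exact hpos
        · intro k h1 h2; rw [hps, hqs]; exact hz k h1 h2
      rw [hLf, hRf1, hRf2, S2 M _ _ _ (ne_of_snd' (by omega))]
    · have hLf : fM j (fMStar n i M) =
          (M.erase (i+1, i+(T+1)) + {(i, i+(T+1))}).erase (j-(U+1), j-1) + {(j-(U+1), j)} := by
        rw [hfst]
        refine sel_J hUj ?_ ?_
        · rw [hpJ, hqJ]; exact hposJ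
        · intro k h1 h2; rw [hpJ, hqJ]; exact hzJ k h1 h2
      have hRf1 : fM j M = M.erase (j-(U+1), j-1) + {(j-(U+1), j)} := sel_J hUj hposJ hzJ
      have hps : pSt (M.erase (j-(U+1), j-1) + {(j-(U+1), j)}) i = pSt M i :=
        pSt_move M i _ _ (by simp; omega) (by simp; omega)
      have hqs : qSt (M.erase (j-(U+1), j-1) + {(j-(U+1), j)}) i = qSt M i :=
        qSt_move M i _ _ (by simp; omega) (by simp; omega)
      have hRf2 : fMStar n i (M.erase (j-(U+1), j-1) + {(j-(U+1), j)}) =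
          (M.erase (j-(U+1), j-1) + {(j-(U+1), j)}).erase (i+1, i+(T+1)) + {(i, i+(T+1))} := by
        refine sel_St hTn ?_ ?_
        · rw [hps, hqs]; exact hpos
        · intro k h1 h2; rw [hps, hqs]; exact hz k h1 h2
      rw [hLf, hRf1, hRf2]
      exact S1 M _ _ _ _ (ne_of_snd' (by omega)) (ne_of_fst' (by omega))

lemma case_lt_K1 {n i j : ℕ} (hi : 1 ≤ i) (hj : 1 ≤ j) (hin : i ≤ n) (hjn : j ≤ n)
    (hlt : i < j) (M : MS) {T : ℕ} (hTn : T < n)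
    (hpos : 0 < RB (pSt M i) (qSt M i) T)
    (hz : ∀ k, T < k → k < n → RB (pSt M i) (qSt M i) k = 0)
    (hK1 : T + 1 = j - i - 1) :
    fM j (fMStar n i M) = fMStar n i (fM j M) := by
  have hd2 : i + 2 ≤ j := by omega
  have hcntSt : 0 < M.count (i+1, j-1) := by
    have h := RB_pos_count hpos
    unfold qSt at h
    rw [show ((i+1 : ℕ), (i+(T+1) : ℕ)) = ((i+1 : ℕ), (j-1 : ℕ)) from
          seg_eq rfl (by omega)] at h
    exact h
  have hBC : qSt M i (T+1) ≤ pSt M i (T+1) :=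
    K1_fact hpos (hz (T+1) (by omega) (by omega))
  have hfst : fMStar n i M = M.erase (i+1, j-1) + {(i, j-1)} := by
    rw [sel_St hTn hpos hz,
      show ((i+1 : ℕ), (i+(T+1) : ℕ)) = ((i+1 : ℕ), (j-1 : ℕ)) from seg_eq rfl (by omega),
      show ((i : ℕ), (i+(T+1) : ℕ)) = ((i : ℕ), (j-1 : ℕ)) from seg_eq rfl (by omega)]
  -- P1 perturbation facts for S_j of Ms = M.erase (i+1, j-1) + {(i, j-1)}
  have hq1 : qJ M j T = qJ (M.erase (i+1, j-1) + {(i, j-1)}) j T + 1 := by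
    unfold qJ
    rw [show ((j - (T+1) : ℕ), (j-1 : ℕ)) = ((i+1 : ℕ), (j-1 : ℕ)) from
          seg_eq (by omega) rfl]
    rw [count_move, if_pos rfl, if_neg (ne_of_fst' (by omega))]
    omega
  have hq2 : qJ (M.erase (i+1, j-1) + {(i, j-1)}) j (T+1) = qJ M j (T+1) + 1 := by
    unfold qJ
    rw [show ((j - (T+1+1) : ℕ), (j-1 : ℕ)) = ((i : ℕ), (j-1 : ℕ)) from
          seg_eq (by omega) rfl]
    rw [count_move, if_neg (ne_of_fst' (by omega)), if_pos rfl]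
    omega
  have hpJk : ∀ k < j, pJ (M.erase (i+1, j-1) + {(i, j-1)}) j k = pJ M j k :=
    fun k _ => congrFun (pJ_move M j _ _ (by simp; omega) (by simp; omega)) k
  have hqJk : ∀ k < j, k ≠ T → k ≠ T + 1 →
      qJ (M.erase (i+1, j-1) + {(i, j-1)}) j k = qJ M j k := fun k hk h1 h2 => by
    unfold qJ
    rw [count_move, if_neg (ne_of_fst' (by omega)), if_neg (ne_of_fst' (by omega))]
    omega
  have hPQJ : pJ M j (T+1) ≤ qJ M j (T+1) := by
    unfold pSt qSt at hBC
    unfold pJ qJ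
    rw [show ((j - (T+1+1) : ℕ), j - 1) = ((i : ℕ), i + (T+1+1) - 1) from
          seg_eq (by omega) (by omega),
        show ((j - (T+1+1) + 1 : ℕ), j) = ((i+1 : ℕ), i + (T+1+1)) from
          seg_eq (by omega) (by omega)]
    exact hBC
  obtain ⟨hC1, hC2, hC3⟩ := P1_lemma (N := j) (by omega) hq1 hq2 hpJk hqJk hPQJ
  rcases split_sel (RB (pJ M j) (qJ M j)) j with hzJ | ⟨U, hUj, hposJ, hzJ⟩
  · -- (K1, none)
    have hLf : fM j (fMStar n i M) = (M.erase (i+1, j-1) + {(i, j-1)}) + {(j,j)} := by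
      rw [hfst]
      refine sel_J_none ?_
      intro k hk
      by_cases hkT : k = T
      · rw [hkT]; exact (hC2 (hzJ T (by omega))).1
      · by_cases hkT1 : k = T + 1
        · rw [hkT1, (hC2 (hzJ T (by omega))).2]; exact hzJ (T+1) (by omega)
        · rw [hC1 k hk hkT hkT1]; exact hzJ k hk
    have hRf1 : fM j M = M + {(j,j)} := sel_J_none hzJ
    have hps : pSt (M + {(j,j)}) i = pSt M i := pSt_add M i _ (by simp; omega)
    have hqs : qSt (M + {(j,j)}) i = qSt M i := qSt_add M i _ (by simp; omega)
    have hRf2 : fMStar n i (M + {(j,j)}) =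
        (M + {(j,j)}).erase (i+1, j-1) + {(i, j-1)} := by
      have h := sel_St (M := M + {(j,j)}) hTn
        (by rw [hps, hqs]; exact hpos)
        (fun k h1 h2 => by rw [hps, hqs]; exact hz k h1 h2)
      rw [show ((i+1 : ℕ), (i+(T+1) : ℕ)) = ((i+1 : ℕ), (j-1 : ℕ)) from seg_eq rfl (by omega),
          show ((i : ℕ), (i+(T+1) : ℕ)) = ((i : ℕ), (j-1 : ℕ)) from seg_eq rfl (by omega)] at h
      exact h
    rw [hLf, hRf1, hRf2]
    exact (S2 M _ _ _ (ne_of_snd' (by omega))).symm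
  · by_cases hUT : U = T
    · -- (K1, K1) chain
      subst hUT
      have hRT1 : RB (pJ M j) (qJ M j) (U+1) = 0 := hzJ (U+1) (by omega) (by omega)
      have hLf : fM j (fMStar n i M) =
          (M.erase (i+1, j-1) + {(i, j-1)}).erase (i, j-1) + {(i, j)} := by
        rw [hfst]
        have h := sel_J (M := M.erase (i+1, j-1) + {(i, j-1)}) (j := j) (T := U+1) (by omega)
          (by rw [(hC3 hposJ).2, hRT1]; omega)
          (fun k h1 h2 => by rw [hC1 k h2 (by omega) (by omega)]; exact hzJ k (by omega) h2)
        rw [show ((j - (U+1+1) : ℕ), (j-1 : ℕ)) = ((i : ℕ), (j-1 : ℕ)) from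
              seg_eq (by omega) rfl,
            show (j - (U+1+1) : ℕ) = (i : ℕ) from by omega] at h
        exact h
      have hRf1 : fM j M = M.erase (i+1, j-1) + {(i+1, j)} := by
        have h := sel_J hUj hposJ hzJ
        rw [show ((j - (U+1) : ℕ), (j-1 : ℕ)) = ((i+1 : ℕ), (j-1 : ℕ)) from
              seg_eq (by omega) rfl,
            show (j - (U+1) : ℕ) = (i+1 : ℕ) from by omega] at h
        exact h
      -- P1 on S_i* of M1 = M.erase (i+1, j-1) + {(i+1, j)}, at a := U
      have hq1' : qSt M i U = qSt (M.erase (i+1, j-1) + {(i+1, j)}) i U + 1 := by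
        unfold qSt
        rw [show ((i+1 : ℕ), (i+(U+1) : ℕ)) = ((i+1 : ℕ), (j-1 : ℕ)) from
              seg_eq rfl (by omega)]
        rw [count_move, if_pos rfl, if_neg (ne_of_snd' (by omega))]
        omega
      have hq2' : qSt (M.erase (i+1, j-1) + {(i+1, j)}) i (U+1) = qSt M i (U+1) + 1 := by
        unfold qSt
        rw [count_move, if_neg (ne_of_snd' (by omega)), if_pos (seg_eq rfl (by omega))]
        omega
      have hpk' : ∀ k < n, pSt (M.erase (i+1, j-1) + {(i+1, j)}) i k = pSt M i k :=
        fun k _ => congrFun (pSt_move M i _ _ (by simp) (by simp)) k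
      have hqk' : ∀ k < n, k ≠ U → k ≠ U + 1 →
          qSt (M.erase (i+1, j-1) + {(i+1, j)}) i k = qSt M i k := fun k _ h1 h2 => by
        unfold qSt
        rw [count_move, if_neg (ne_of_snd' (by omega)), if_neg (ne_of_snd' (by omega))]
        omega
      have hPQ' : pSt M i (U+1) ≤ qSt M i (U+1) := by
        have hk1 := K1_fact hposJ hRT1
        unfold pJ qJ at hk1
        unfold pSt qSt
        rw [show ((j - (U+1+1) : ℕ), j - 1) = ((i : ℕ), i + (U+1+1) - 1) from
              seg_eq (by omega) (by omega),
            show ((j - (U+1+1) + 1 : ℕ), j) = ((i+1 : ℕ), i + (U+1+1)) from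
              seg_eq (by omega) (by omega)] at hk1
        exact hk1
      obtain ⟨hD1, hD2, hD3⟩ := P1_lemma (N := n) (by omega) hq1' hq2' hpk' hqk' hPQ'
      have hRf2 : fMStar n i (M.erase (i+1, j-1) + {(i+1, j)}) =
          (M.erase (i+1, j-1) + {(i+1, j)}).erase (i+1, j) + {(i, j)} := by
        have h := sel_St (n := n) (i := i) (M := M.erase (i+1, j-1) + {(i+1, j)}) (T := U+1) (by omega)
          (by rw [(hD3 hpos).2, hz (U+1) (by omega) (by omega)]; omega)
          (fun k h1 h2 => by rw [hD1 k h2 (by omega) (by omega)]; exact hz k (by omega) h2)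
        rw [show ((i+1 : ℕ), (i+(U+1+1) : ℕ)) = ((i+1 : ℕ), (j : ℕ)) from
              seg_eq rfl (by omega),
            show (i+(U+1+1) : ℕ) = (j : ℕ) from by omega] at h
        exact h
      rw [hLf, hRf1, hRf2, S4, S4]
    · by_cases hUT1 : U = T + 1
      · -- (K1, K2) chain
        subst hUT1
        have hcntC : 0 < M.count (i, j-1) := by
          have h := RB_pos_count hposJ
          unfold qJ at h
          rw [show ((j - (T+1+1) : ℕ), (j-1 : ℕ)) = ((i : ℕ), (j-1 : ℕ)) from
                seg_eq (by omega) rfl] at h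
          exact h
        have hLf : fM j (fMStar n i M) =
            (M.erase (i+1, j-1) + {(i, j-1)}).erase (i, j-1) + {(i, j)} := by
          rw [hfst]
          have hpos' : 0 < RB (pJ (M.erase (i+1, j-1) + {(i, j-1)}) j)
              (qJ (M.erase (i+1, j-1) + {(i, j-1)}) j) (T+1) := by
            rcases Nat.eq_zero_or_pos (RB (pJ M j) (qJ M j) T) with h0 | h0
            · rw [(hC2 h0).2]; exact hposJ
            · rw [(hC3 h0).2]; omega
          have h := sel_J (M := M.erase (i+1, j-1) + {(i, j-1)}) (j := j) (T := T+1) (by omega)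
            hpos'
            (fun k h1 h2 => by rw [hC1 k h2 (by omega) (by omega)]; exact hzJ k (by omega) h2)
          rw [show ((j - (T+1+1) : ℕ), (j-1 : ℕ)) = ((i : ℕ), (j-1 : ℕ)) from
                seg_eq (by omega) rfl,
              show (j - (T+1+1) : ℕ) = (i : ℕ) from by omega] at h
          exact h
        have hRf1 : fM j M = M.erase (i, j-1) + {(i, j)} := by
          have h := sel_J hUj hposJ hzJ
          rw [show ((j - (T+1+1) : ℕ), (j-1 : ℕ)) = ((i : ℕ), (j-1 : ℕ)) from
                seg_eq (by omega) rfl,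
              show (j - (T+1+1) : ℕ) = (i : ℕ) from by omega] at h
          exact h
        -- P2 on S_i* of M1 = M.erase (i, j-1) + {(i, j)}, at a := T+1
        have hp1 : pSt M i (T+1) = pSt (M.erase (i, j-1) + {(i, j)}) i (T+1) + 1 := by
          unfold pSt
          rw [show ((i : ℕ), (i+(T+1+1)-1 : ℕ)) = ((i : ℕ), (j-1 : ℕ)) from
                seg_eq rfl (by omega)]
          rw [count_move, if_pos rfl, if_neg (ne_of_snd' (by omega))]
          omega
        have hp2 : pSt (M.erase (i, j-1) + {(i, j)}) i (T+1+1) = pSt M i (T+1+1) + 1 := by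
          unfold pSt
          rw [count_move, if_neg (ne_of_snd' (by omega)), if_pos (seg_eq rfl (by omega))]
          omega
        have hqk : ∀ k < n, qSt (M.erase (i, j-1) + {(i, j)}) i k = qSt M i k :=
          fun k _ => congrFun (qSt_move M i _ _ (by simp) (by simp)) k
        have hpk : ∀ k < n, k ≠ T + 1 → k ≠ T + 1 + 1 →
            pSt (M.erase (i, j-1) + {(i, j)}) i k = pSt M i k := fun k _ h1 h2 => by
          unfold pSt
          rw [count_move, if_neg (ne_of_snd' (by omega)), if_neg (ne_of_snd' (by omega))]
          omega
        have hPQ : qSt M i (T+1) + 1 ≤ pSt M i (T+1) := by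
          have hk2 := K2_fact hposJ
          unfold pJ qJ at hk2
          unfold pSt qSt
          rw [show ((j - (T+1+1) : ℕ), j - 1) = ((i : ℕ), i + (T+1+1) - 1) from
                seg_eq (by omega) (by omega),
              show ((j - (T+1+1) + 1 : ℕ), j) = ((i+1 : ℕ), i + (T+1+1)) from
                seg_eq (by omega) (by omega)] at hk2
          exact hk2
        have hall := P2_lemma (N := n) (a := T+1) (by omega) hp1 hp2 hqk hpk hPQ
        have hRf2 : fMStar n i (M.erase (i, j-1) + {(i, j)}) =
            (M.erase (i, j-1) + {(i, j)}).erase (i+1, j-1) + {(i, j-1)} := by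
          have h := sel_St (M := M.erase (i, j-1) + {(i, j)}) hTn
            (by rw [hall T hTn]; exact hpos)
            (fun k h1 h2 => by rw [hall k h2]; exact hz k h1 h2)
          rw [show ((i+1 : ℕ), (i+(T+1) : ℕ)) = ((i+1 : ℕ), (j-1 : ℕ)) from
                seg_eq rfl (by omega),
              show ((i : ℕ), (i+(T+1) : ℕ)) = ((i : ℕ), (j-1 : ℕ)) from
                seg_eq rfl (by omega)] at h
          exact h
        rw [hLf, hRf1, hRf2, S4,
          S5 M (i+1, j-1) (i, j-1) (i, j) (Multiset.count_pos.mp hcntC)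
            (ne_of_fst' (by omega)) (ne_of_fst' (by omega))]
      · -- (K1, O)
        have hLf : fM j (fMStar n i M) =
            (M.erase (i+1, j-1) + {(i, j-1)}).erase (j-(U+1), j-1) + {(j-(U+1), j)} := by
          rw [hfst]
          refine sel_J hUj ?_ ?_
          · rw [hC1 U hUj hUT hUT1]; exact hposJ
          · intro k h1 h2
            by_cases hkT : k = T
            · rw [hkT]
              exact (hC2 (hzJ T (by omega) (by omega))).1
            · by_cases hkT1 : k = T + 1
              · rw [hkT1, (hC2 (hzJ T (by omega) (by omega))).2]
                exact hzJ (T+1) (by omega) (by omega)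
              · rw [hC1 k h2 hkT hkT1]
                exact hzJ k h1 h2
        have hRf1 : fM j M = M.erase (j-(U+1), j-1) + {(j-(U+1), j)} := sel_J hUj hposJ hzJ
        have hps : pSt (M.erase (j-(U+1), j-1) + {(j-(U+1), j)}) i = pSt M i :=
          pSt_move M i _ _ (by simp; omega) (by simp; omega)
        have hqs : qSt (M.erase (j-(U+1), j-1) + {(j-(U+1), j)}) i = qSt M i :=
          qSt_move M i _ _ (by simp; omega) (by simp; omega)
        have hRf2 : fMStar n i (M.erase (j-(U+1), j-1) + {(j-(U+1), j)}) =
            (M.erase (j-(U+1), j-1) + {(j-(U+1), j)}).erase (i+1, j-1) + {(i, j-1)} := by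
          have h := sel_St (M := M.erase (j-(U+1), j-1) + {(j-(U+1), j)}) hTn
            (by rw [hps, hqs]; exact hpos)
            (fun k h1 h2 => by rw [hps, hqs]; exact hz k h1 h2)
          rw [show ((i+1 : ℕ), (i+(T+1) : ℕ)) = ((i+1 : ℕ), (j-1 : ℕ)) from
                seg_eq rfl (by omega),
              show ((i : ℕ), (i+(T+1) : ℕ)) = ((i : ℕ), (j-1 : ℕ)) from
                seg_eq rfl (by omega)] at h
          exact h
        rw [hLf, hRf1, hRf2]
        exact S1 M _ _ _ _ (ne_of_snd' (by omega)) (ne_of_fst' (by omega))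

lemma case_lt_K2 {n i j : ℕ} (hi : 1 ≤ i) (hj : 1 ≤ j) (hin : i ≤ n) (hjn : j ≤ n)
    (hlt : i < j) (M : MS) {T : ℕ} (hTn : T < n)
    (hpos : 0 < RB (pSt M i) (qSt M i) T)
    (hz : ∀ k, T < k → k < n → RB (pSt M i) (qSt M i) k = 0)
    (hK2 : T = j - i - 1) :
    fM j (fMStar n i M) = fMStar n i (fM j M) := by
  have hjiT : i + (T+1) = j := by omega
  have hcntSt : 0 < M.count (i+1, j) := by
    have h := RB_pos_count hpos
    unfold qSt at h
    rw [show ((i+1 : ℕ), (i+(T+1) : ℕ)) = ((i+1 : ℕ), (j : ℕ)) from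
          seg_eq rfl (by omega)] at h
    exact h
  have hBC2 : pSt M i T + 1 ≤ qSt M i T := K2_fact hpos
  have hfst : fMStar n i M = M.erase (i+1, j) + {(i, j)} := by
    rw [sel_St hTn hpos hz,
      show ((i+1 : ℕ), (i+(T+1) : ℕ)) = ((i+1 : ℕ), (j : ℕ)) from seg_eq rfl (by omega),
      show ((i : ℕ), (i+(T+1) : ℕ)) = ((i : ℕ), (j : ℕ)) from seg_eq rfl (by omega)]
  -- P2 perturbation facts for S_j of Ms = M.erase (i+1, j) + {(i, j)}, at a := T
  have hp1 : pJ M j T = pJ (M.erase (i+1, j) + {(i, j)}) j T + 1 := by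
    unfold pJ
    rw [show ((j - (T+1) + 1 : ℕ), (j : ℕ)) = ((i+1 : ℕ), (j : ℕ)) from
          seg_eq (by omega) rfl]
    rw [count_move, if_pos rfl, if_neg (ne_of_fst' (by omega))]
    omega
  have hp2 : pJ (M.erase (i+1, j) + {(i, j)}) j (T+1) = pJ M j (T+1) + 1 := by
    unfold pJ
    rw [show ((j - (T+1+1) + 1 : ℕ), (j : ℕ)) = ((i : ℕ), (j : ℕ)) from
          seg_eq (by omega) rfl]
    rw [count_move, if_neg (ne_of_fst' (by omega)), if_pos rfl]
    omega
  have hqJk : ∀ k < j, qJ (M.erase (i+1, j) + {(i, j)}) j k = qJ M j k :=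
    fun k _ => congrFun (qJ_move M j _ _ (by simp; omega) (by simp; omega)) k
  have hpJk : ∀ k < j, k ≠ T → k ≠ T + 1 →
      pJ (M.erase (i+1, j) + {(i, j)}) j k = pJ M j k := fun k hk h1 h2 => by
    unfold pJ
    rw [count_move, if_neg (ne_of_fst' (by omega)), if_neg (ne_of_fst' (by omega))]
    omega
  have hPQJ : qJ M j T + 1 ≤ pJ M j T := by
    unfold pSt qSt at hBC2
    unfold pJ qJ
    rw [show ((j - (T+1) : ℕ), j - 1) = ((i : ℕ), i + (T+1) - 1) from
          seg_eq (by omega) (by omega),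
        show ((j - (T+1) + 1 : ℕ), j) = ((i+1 : ℕ), i + (T+1)) from
          seg_eq (by omega) (by omega)]
    exact hBC2
  have hallJ := P2_lemma (N := j) (a := T) (by omega) hp1 hp2 hqJk hpJk hPQJ
  rcases split_sel (RB (pJ M j) (qJ M j)) j with hzJ | ⟨U, hUj, hposJ, hzJ⟩
  · -- (K2, none)
    have hLf : fM j (fMStar n i M) = (M.erase (i+1, j) + {(i, j)}) + {(j,j)} := by
      rw [hfst]
      exact sel_J_none (fun k hk => by rw [hallJ k hk]; exact hzJ k hk)
    have hRf1 : fM j M = M + {(j,j)} := sel_J_none hzJ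
    by_cases hd1 : i + 1 = j
    · -- (K2, N1)
      have hT0 : T = 0 := by omega
      subst hT0
      have hq0 : qSt (M + {(j,j)}) i 0 = qSt M i 0 + 1 := by
        unfold qSt
        rw [count_addS, if_pos (seg_eq (by omega) (by omega))]
      have hqk : ∀ k < n, k ≠ 0 → qSt (M + {(j,j)}) i k = qSt M i k := fun k _ hk0 => by
        unfold qSt
        rw [count_addS, if_neg (ne_of_snd' (by omega))]
        omega
      have hpk : ∀ k < n, pSt (M + {(j,j)}) i k = pSt M i k := fun k _ => by
        unfold pSt
        rw [count_addS, if_neg (ne_of_fst' (by omega))]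
        omega
      obtain ⟨hR0, hRk⟩ := P3_lemma (N := n) (by omega) hq0 hqk hpk (by omega)
      have hRf2 : fMStar n i (M + {(j,j)}) =
          (M + {(j,j)}).erase (i+1, j) + {(i, j)} := by
        have h := sel_St (n := n) (i := i) (M := M + {(j,j)}) (T := 0) (by omega)
          (by rw [hR0]; omega)
          (fun k h1 h2 => by rw [hRk k h2 (by omega)]; exact hz k h1 h2)
        rw [show ((i+1 : ℕ), (i+(0+1) : ℕ)) = ((i+1 : ℕ), (j : ℕ)) from
              seg_eq rfl (by omega),
            show ((i : ℕ), (i+(0+1) : ℕ)) = ((i : ℕ), (j : ℕ)) from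
              seg_eq rfl (by omega)] at h
        exact h
      rw [hLf, hRf1, hRf2,
        show ((j : ℕ), (j : ℕ)) = ((i+1 : ℕ), (j : ℕ)) from seg_eq (by omega) rfl,
        S0, S6 M (i+1, j) (i, j) (Multiset.count_pos.mp hcntSt)]
    · -- (K2, none, d ≥ 2)
      have hps : pSt (M + {(j,j)}) i = pSt M i := pSt_add M i _ (by simp; omega)
      have hqs : qSt (M + {(j,j)}) i = qSt M i := qSt_add M i _ (by simp; omega)
      have hRf2 : fMStar n i (M + {(j,j)}) =
          (M + {(j,j)}).erase (i+1, j) + {(i, j)} := by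
        have h := sel_St (M := M + {(j,j)}) hTn
          (by rw [hps, hqs]; exact hpos)
          (fun k h1 h2 => by rw [hps, hqs]; exact hz k h1 h2)
        rw [show ((i+1 : ℕ), (i+(T+1) : ℕ)) = ((i+1 : ℕ), (j : ℕ)) from
              seg_eq rfl (by omega),
            show ((i : ℕ), (i+(T+1) : ℕ)) = ((i : ℕ), (j : ℕ)) from
              seg_eq rfl (by omega)] at h
        exact h
      rw [hLf, hRf1, hRf2]
      exact (S2 M _ _ _ (ne_of_fst' (by omega))).symm
  · -- (K2, some U)
    have hLf : fM j (fMStar n i M) =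
        (M.erase (i+1, j) + {(i, j)}).erase (j-(U+1), j-1) + {(j-(U+1), j)} := by
      rw [hfst]
      refine sel_J hUj ?_ ?_
      · rw [hallJ U hUj]; exact hposJ
      · intro k h1 h2; rw [hallJ k h2]; exact hzJ k h1 h2
    have hRf1 : fM j M = M.erase (j-(U+1), j-1) + {(j-(U+1), j)} := sel_J hUj hposJ hzJ
    by_cases hUT : U + 1 = T
    · -- (K2, K1) chain
      have hcntA : 0 < M.count (i+1, j-1) := by
        have h := RB_pos_count hposJ
        unfold qJ at h
        rw [show ((j - (U+1) : ℕ), (j-1 : ℕ)) = ((i+1 : ℕ), (j-1 : ℕ)) from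
              seg_eq (by omega) rfl] at h
        exact h
      rw [show ((j - (U+1) : ℕ), (j-1 : ℕ)) = ((i+1 : ℕ), (j-1 : ℕ)) from
            seg_eq (by omega) rfl,
          show (j - (U+1) : ℕ) = (i+1 : ℕ) from by omega] at hLf hRf1
      -- P1 on S_i* of M1 = M.erase (i+1, j-1) + {(i+1, j)}, at a := U
      have hq1' : qSt M i U = qSt (M.erase (i+1, j-1) + {(i+1, j)}) i U + 1 := by
        unfold qSt
        rw [show ((i+1 : ℕ), (i+(U+1) : ℕ)) = ((i+1 : ℕ), (j-1 : ℕ)) from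
              seg_eq rfl (by omega)]
        rw [count_move, if_pos rfl, if_neg (ne_of_snd' (by omega))]
        have hc : 0 < M.count (i+1, j-1) := hcntA
        omega
      have hq2' : qSt (M.erase (i+1, j-1) + {(i+1, j)}) i (U+1) = qSt M i (U+1) + 1 := by
        unfold qSt
        rw [count_move, if_neg (ne_of_snd' (by omega)), if_pos (seg_eq rfl (by omega))]
        omega
      have hpk' : ∀ k < n, pSt (M.erase (i+1, j-1) + {(i+1, j)}) i k = pSt M i k :=
        fun k _ => congrFun (pSt_move M i _ _ (by simp) (by simp)) k
      have hqk' : ∀ k < n, k ≠ U → k ≠ U + 1 →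
          qSt (M.erase (i+1, j-1) + {(i+1, j)}) i k = qSt M i k := fun k _ h1 h2 => by
        unfold qSt
        rw [count_move, if_neg (ne_of_snd' (by omega)), if_neg (ne_of_snd' (by omega))]
        omega
      have hPQ' : pSt M i (U+1) ≤ qSt M i (U+1) := by
        rw [hUT]
        omega
      obtain ⟨hD1, hD2, hD3⟩ := P1_lemma (N := n) (by omega) hq1' hq2' hpk' hqk' hPQ'
      have hRf2 : fMStar n i (M.erase (i+1, j-1) + {(i+1, j)}) =
          (M.erase (i+1, j-1) + {(i+1, j)}).erase (i+1, j) + {(i, j)} := by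
        have hpos' : 0 < RB (pSt (M.erase (i+1, j-1) + {(i+1, j)}) i)
            (qSt (M.erase (i+1, j-1) + {(i+1, j)}) i) (U+1) := by
          rcases Nat.eq_zero_or_pos (RB (pSt M i) (qSt M i) U) with h0 | h0
          · rw [(hD2 h0).2, hUT]; exact hpos
          · rw [(hD3 h0).2]; omega
        have h := sel_St (n := n) (i := i)
          (M := M.erase (i+1, j-1) + {(i+1, j)}) (T := U+1) (by omega)
          hpos'
          (fun k h1 h2 => by
            rw [hD1 k h2 (by omega) (by omega)]
            exact hz k (by omega) h2)
        rw [show ((i+1 : ℕ), (i+(U+1+1) : ℕ)) = ((i+1 : ℕ), (j : ℕ)) from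
              seg_eq rfl (by omega),
            show ((i : ℕ), (i+(U+1+1) : ℕ)) = ((i : ℕ), (j : ℕ)) from
              seg_eq rfl (by omega)] at h
        exact h
      rw [hLf, hRf1, hRf2, S4,
        S5 M (i+1, j-1) (i+1, j) (i, j) (Multiset.count_pos.mp hcntSt)
          (ne_of_snd' (by omega)) (ne_of_fst' (by omega))]
    · by_cases hUT2 : U = T
      · -- (K2, K2) impossible
        exfalso
        have hk2 := K2_fact hposJ
        unfold pJ qJ at hk2
        rw [show ((j - (U+1) : ℕ), j - 1) = ((i : ℕ), (j - 1 : ℕ)) from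
              seg_eq (by omega) rfl,
            show ((j - (U+1) + 1 : ℕ), j) = ((i+1 : ℕ), (j : ℕ)) from
              seg_eq (by omega) rfl] at hk2
        unfold pSt qSt at hBC2
        rw [show ((i : ℕ), (i + (T+1) - 1 : ℕ)) = ((i : ℕ), (j-1 : ℕ)) from
              seg_eq rfl (by omega),
            show ((i+1 : ℕ), (i + (T+1) : ℕ)) = ((i+1 : ℕ), (j : ℕ)) from
              seg_eq rfl (by omega)] at hBC2
        omega
      · -- (K2, O)
        have hps : pSt (M.erase (j-(U+1), j-1) + {(j-(U+1), j)}) i = pSt M i :=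
          pSt_move M i _ _ (by simp; omega) (by simp; omega)
        have hqs : qSt (M.erase (j-(U+1), j-1) + {(j-(U+1), j)}) i = qSt M i :=
          qSt_move M i _ _ (by simp; omega) (by simp; omega)
        have hRf2 : fMStar n i (M.erase (j-(U+1), j-1) + {(j-(U+1), j)}) =
            (M.erase (j-(U+1), j-1) + {(j-(U+1), j)}).erase (i+1, j) + {(i, j)} := by
          have h := sel_St (M := M.erase (j-(U+1), j-1) + {(j-(U+1), j)}) hTn
            (by rw [hps, hqs]; exact hpos)
            (fun k h1 h2 => by rw [hps, hqs]; exact hz k h1 h2)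
          rw [show ((i+1 : ℕ), (i+(T+1) : ℕ)) = ((i+1 : ℕ), (j : ℕ)) from
                seg_eq rfl (by omega),
              show ((i : ℕ), (i+(T+1) : ℕ)) = ((i : ℕ), (j : ℕ)) from
                seg_eq rfl (by omega)] at h
          exact h
        rw [hLf, hRf1, hRf2]
        exact S1 M _ _ _ _ (ne_of_fst' (by omega)) (ne_of_snd' (by omega))

theorem stmt8' (n i j : ℕ) (hi : 1 ≤ i) (hin : i ≤ n) (hj : 1 ≤ j) (hjn : j ≤ n)
    (hij : i ≠ j) (M : MS) :
    fM j (fMStar n i M) = fMStar n i (fM j M) := by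
  rcases Nat.lt_or_ge i j with hlt | hge
  · rcases split_sel (RB (pSt M i) (qSt M i)) n with hzSt | ⟨T, hTn, hpos, hz⟩
    · exact case_lt_none hi hj hin hjn hlt M hzSt
    · by_cases h1 : T + 1 = j - i - 1
      · exact case_lt_K1 hi hj hin hjn hlt M hTn hpos hz h1
      · by_cases h2 : T = j - i - 1
        · exact case_lt_K2 hi hj hin hjn hlt M hTn hpos hz h2
        · exact case_lt_O hi hj hin hjn hlt M hTn hpos hz h1 h2
  · exact case_gt hi hj hin hjn (by omega) M

end SP

theorem stmt8 (n i j : ℕ) (hi : 1 ≤ i) (hin : i ≤ n) (hj : 1 ≤ j) (hjn : j ≤ n)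
    (hij : i ≠ j) (M : MS) (hM : IsMS n M) :
    fM j (fMStar n i M) = fMStar n i (fM j M) := by
  exact SP.stmt8' n i j hi hin hj hjn hij M
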